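/- arXiv:1710.02667 — 9 statements merged into one kernel-verified Lean document; each statement's English description precedes it below -/
import Mathlib

section
/- Let n ≥ 1, let m_1, …, m_n > 0 be real numbers and let q_1, …, q_n ∈ ℝ² be nonzero vectors. Then the following are equivalent: (i) for every ζ ≥ 0, ∑_{i=1}^n m_i q_i (|q_i|² + ζ)^{-3/2} = 0 (the zero vector of ℝ²); (ii) the configuration is balanced, i.e. for every r > 0 such that the set F_r = {i : |q_i| = r} is nonempty, one has ∑_{i ∈ F_r} m_i q_i = 0. (Condition (i) is exactly the condition that the vertical line through the center of mass is invariant under the gravitational field generated by the bodies q_1, …, q_n with masses m_1, …, m_n, for a point at height z with ζ = z².) -/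
/-!
Grouping the bodies by radius turns condition (i) into `∑ᵣ (r² + ζ)^(-3/2) • vᵣ = 0`, where
`vᵣ` is the weighted sum of the bodies on the circle of radius `r`. The functions
`ζ ↦ (a + ζ)^p` with distinct `a ≥ 0` and `p ∉ ℕ` are linearly independent: differentiating
`k` times and evaluating at `ζ = 1` turns a vanishing combination into vanishing power sums
`∑ₐ ((a + 1)⁻¹)^k • (a + 1)^p • vₐ`, and a Lagrange basis polynomial isolates a single term.
Hence (i) forces every `vᵣ` to vanish, and conversely.
-/

open Finset Polynomial Filter

theorem eq_zero_of_forall_sum_pow_smul_eq_zero {ι K E : Type*} [Field K] [AddCommGroup E]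
    [Module K E] {s : Finset ι} {x : ι → K} (hx : Set.InjOn x s) {d : ι → E}
    (h : ∀ k : ℕ, ∑ j ∈ s, x j ^ k • d j = 0) {i : ι} (hi : i ∈ s) : d i = 0 := by
  classical
  have heval : ∀ P : K[X], ∑ j ∈ s, P.eval (x j) • d j = 0 := by
    intro P
    induction P using Polynomial.induction_on' with
    | add P Q hP hQ => simp only [eval_add, add_smul, sum_add_distrib, hP, hQ, add_zero]
    | monomial k c => simp only [eval_monomial, mul_smul, ← smul_sum, h k, smul_zero]
  have hi' := heval (Lagrange.basis s x i)
  rw [sum_eq_single_of_mem i hi fun j hj hji => by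
    rw [Lagrange.eval_basis_of_ne (Ne.symm hji) hj, zero_smul],
    Lagrange.eval_basis_self hx hi, one_smul] at hi'
  exact hi'

section RpowSum

variable {ι E : Type*} [NormedAddCommGroup E] [NormedSpace ℝ E] {s : Finset ι} {a : ι → ℝ}
  {p : ℝ} {v : ι → E}

theorem sum_rpow_add_sub_natCast_smul_eq_zero (ha : ∀ i ∈ s, 0 ≤ a i) (hp : ∀ k : ℕ, p ≠ k)
    (h : ∀ ζ > 0, ∑ i ∈ s, (a i + ζ) ^ p • v i = 0) (k : ℕ) {ζ : ℝ} (hζ : 0 < ζ) :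
    ∑ i ∈ s, (a i + ζ) ^ (p - k) • v i = 0 := by
  induction k generalizing ζ with
  | zero => simpa using h ζ hζ
  | succ k ih =>
    have hderiv : HasDerivAt (fun z => ∑ i ∈ s, (a i + z) ^ (p - k) • v i)
        ((p - k) • ∑ i ∈ s, (a i + ζ) ^ (p - (k + 1 : ℕ)) • v i) ζ := by
      rw [smul_sum]
      refine HasDerivAt.fun_sum fun i hi => ?_
      have hpos : a i + ζ ≠ 0 := by linarith [ha i hi]
      convert (((hasDerivAt_id ζ).const_add (a i)).rpow_const (p := p - k)
        (Or.inl hpos)).smul_const (v i) using 1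
      · rfl
      · rw [smul_smul, id, one_mul, Nat.cast_succ, sub_add_eq_sub_sub]
    have hvanish : (fun z => ∑ i ∈ s, (a i + z) ^ (p - k) • v i) =ᶠ[nhds ζ] fun _ => 0 :=
      eventually_of_mem (Ioi_mem_nhds hζ) fun z hz => ih hz
    have hpk : p - k ≠ 0 := sub_ne_zero.mpr (hp k)
    rw [← smul_eq_zero_iff_right hpk, ← hderiv.deriv, hvanish.deriv_eq, deriv_const]

theorem eq_zero_of_forall_sum_rpow_add_smul_eq_zero (ha : ∀ i ∈ s, 0 ≤ a i)
    (ha_inj : Set.InjOn a s) (hp : ∀ k : ℕ, p ≠ k)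
    (h : ∀ ζ > 0, ∑ i ∈ s, (a i + ζ) ^ p • v i = 0) {i : ι} (hi : i ∈ s) : v i = 0 := by
  have hpos : ∀ j ∈ s, 0 < a j + 1 := fun j hj => by linarith [ha j hj]
  have hpow : ∀ k : ℕ, ∑ j ∈ s, (a j + 1)⁻¹ ^ k • (a j + 1) ^ p • v j = 0 := fun k => by
    rw [← sum_rpow_add_sub_natCast_smul_eq_zero ha hp h k one_pos]
    refine sum_congr rfl fun j hj => ?_
    rw [smul_smul, Real.rpow_sub_natCast (hpos j hj).ne', inv_pow, div_eq_inv_mul]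
  have hinj : Set.InjOn (fun j => (a j + 1)⁻¹) s := fun j hj l hl hjl =>
    ha_inj hj hl (by simpa using inv_inj.mp hjl)
  exact (smul_eq_zero_iff_right (Real.rpow_pos_of_pos (hpos i hi) p).ne').mp
    (eq_zero_of_forall_sum_pow_smul_eq_zero hinj hpow hi)

end RpowSum

theorem Finset.sum_comp_smul_eq_sum_image_smul {ι κ R E : Type*} [DecidableEq κ] [Semiring R]
    [AddCommMonoid E] [Module R E] (s : Finset ι) (g : ι → κ) (φ : κ → R) (w : ι → E) :
    ∑ i ∈ s, φ (g i) • w i = ∑ b ∈ s.image g, φ b • ∑ i ∈ s with g i = b, w i := by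
  rw [← sum_fiberwise_of_maps_to fun i hi => mem_image_of_mem g hi]
  refine sum_congr rfl fun b _ => ?_
  rw [smul_sum]
  exact sum_congr rfl fun i hi => by rw [(mem_filter.mp hi).2]

theorem line_invariant_iff_balanced_general
    (n : ℕ) (m : Fin n → ℝ)
    (q : Fin n → EuclideanSpace ℝ (Fin 2)) :
    (∀ ζ : ℝ, 0 ≤ ζ →
        ∑ i, (m i * (‖q i‖ ^ 2 + ζ) ^ (-(3 / 2) : ℝ)) • q i = 0) ↔
    (∀ r : ℝ, 0 < r → (∃ i, ‖q i‖ = r) →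
        ∑ i ∈ Finset.univ.filter (fun i => ‖q i‖ = r), m i • q i = 0) := by
  classical
  set S := univ.image fun i => ‖q i‖
  set v := fun r => ∑ i ∈ univ.filter (fun i => ‖q i‖ = r), m i • q i
  have hfiber : ∀ ζ : ℝ, ∑ i, (m i * (‖q i‖ ^ 2 + ζ) ^ (-(3 / 2) : ℝ)) • q i =
      ∑ r ∈ S, (r ^ 2 + ζ) ^ (-(3 / 2) : ℝ) • v r := fun ζ => by
    simp_rw [mul_comm (m _), mul_smul]
    exact sum_comp_smul_eq_sum_image_smul univ (fun i => ‖q i‖) (fun r => (r ^ 2 + ζ) ^ _) _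
  have hS : ∀ r ∈ S, 0 ≤ r := by
    simp only [S, mem_image]; rintro _ ⟨i, -, rfl⟩; exact norm_nonneg _
  have hv₀ : v 0 = 0 := sum_eq_zero fun i hi => by
    rw [norm_eq_zero.mp (mem_filter.mp hi).2, smul_zero]
  have hbalanced : (∀ r ∈ S, v r = 0) ↔
      ∀ r : ℝ, 0 < r → (∃ i, ‖q i‖ = r) → v r = 0 := by
    simp only [S, mem_image, mem_univ, true_and]
    refine ⟨fun h r _ hr => h r hr, fun h r hr => ?_⟩
    rcases (hS r (by simpa [S] using hr)).eq_or_lt with rfl | hr₀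
    exacts [hv₀, h r hr₀ hr]
  rw [← hbalanced]
  simp_rw [hfiber]
  refine ⟨fun h r hr => ?_, fun h ζ _ => sum_eq_zero fun r hr => by rw [h r hr, smul_zero]⟩
  refine eq_zero_of_forall_sum_rpow_add_smul_eq_zero (fun r _ => sq_nonneg r)
    ((pow_left_strictMonoOn₀ two_ne_zero).injOn.mono hS)
    (fun k => ne_of_lt (by linarith [(k.cast_nonneg : (0 : ℝ) ≤ k)])) (fun ζ hζ => h ζ hζ.le) hr

/-- The vertical line through the center of mass is invariant under the
gravitational field of the planar bodies `q_1, …, q_n` with masses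
`m_1, …, m_n` (condition (i)) if and only if the configuration is balanced
(condition (ii)): every maximal set of bodies equidistant from the origin has
center of mass zero. -/
theorem line_invariant_iff_balanced
    (n : ℕ) (hn : 1 ≤ n) (m : Fin n → ℝ) (hm : ∀ i, 0 < m i)
    (q : Fin n → EuclideanSpace ℝ (Fin 2)) (hq : ∀ i, q i ≠ 0) :
    (∀ ζ : ℝ, 0 ≤ ζ →
        ∑ i, (m i * (‖q i‖ ^ 2 + ζ) ^ (-(3 / 2) : ℝ)) • q i = 0) ↔
    (∀ r : ℝ, 0 < r → (∃ i, ‖q i‖ = r) →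
        ∑ i ∈ Finset.univ.filter (fun i => ‖q i‖ = r), m i • q i = 0) :=
  line_invariant_iff_balanced_general n m q
end

section
/- Fix an integer n ≥ 1, masses m_1, …, m_n > 0 and radii s_1, …, s_n > 0. Let z : ℝ → ℝ be a twice differentiable solution of z''(t) = −∑_{i=1}^n m_i z(t)/(s_i² + z(t)²)^{3/2} whose energy E = z'(0)²/2 − ∑_{i=1}^n m_i (s_i² + z(0)²)^{-1/2} is strictly positive. Then the motion is hyperbolic: there exists σ ∈ {−1, +1} such that σ·z(t) → +∞ as t → +∞ and z'(t) → σ·√(2E) as t → +∞. -/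
/-!
The energy identity `z'² = 2E + 2U(z)`, with the force function `U = ∑ mᵢ (sᵢ² + z²)^(-1/2) ≥ 0`,
gives `z'² ≥ 2E > 0`. So `z'` never vanishes and keeps a sign `σ`, and `σ z' ≥ √(2E)`: the body
escapes at least linearly. Since `U` vanishes at infinity, `z'² → 2E`, i.e. `σ z' → √(2E)`.
-/

open Filter Topology Bornology

/-- `U` is a force function, i.e. minus the potential energy. -/
theorem deriv_sq_div_two_sub_eq_of_deriv_deriv_eq {U U' : ℝ → ℝ} (hU : ∀ x, HasDerivAt U (U' x) x)
    {z : ℝ → ℝ} (hz : Differentiable ℝ z) (hz' : Differentiable ℝ (deriv z))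
    (hode : ∀ t, deriv (deriv z) t = U' (z t)) (t : ℝ) :
    deriv z t ^ 2 / 2 - U (z t) = deriv z 0 ^ 2 / 2 - U (z 0) := by
  have hderiv : ∀ t, HasDerivAt (fun t => deriv z t ^ 2 / 2 - U (z t)) 0 t := by
    intro t
    have hkin := ((hz' t).hasDerivAt.pow 2).div_const 2
    have hpot := (hU (z t)).comp t (hz t).hasDerivAt
    refine (hkin.sub hpot).congr_deriv ?_
    rw [hode]
    push_cast
    ring
  exact is_const_of_deriv_eq_zero (fun t => (hderiv t).differentiableAt)
    (fun t => (hderiv t).deriv) t 0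

theorem exists_sign_mul_pos_of_continuous_of_ne_zero {X : Type*} [TopologicalSpace X]
    [PreconnectedSpace X] {f : X → ℝ} (hf : Continuous f) (hne : ∀ x, f x ≠ 0) (x₀ : X) :
    ∃ σ : ℝ, (σ = -1 ∨ σ = 1) ∧ ∀ x, 0 < σ * f x := by
  rcases (hne x₀).lt_or_gt with hneg | hpos
  · refine ⟨-1, Or.inl rfl, fun x => ?_⟩
    by_contra! hle
    obtain ⟨y, hy⟩ := intermediate_value_univ x₀ x hf ⟨hneg.le, by linarith⟩
    exact hne y hy
  · refine ⟨1, Or.inr rfl, fun x => ?_⟩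
    by_contra! hle
    obtain ⟨y, hy⟩ := intermediate_value_univ x x₀ hf ⟨by linarith, hpos.le⟩
    exact hne y hy

theorem tendsto_atTop_of_le_deriv {f : ℝ → ℝ} {c : ℝ} (hc : 0 < c) (hf : Differentiable ℝ f)
    (hle : ∀ t, c ≤ deriv f t) : Tendsto f atTop atTop := by
  have hderiv : ∀ t, HasDerivAt (fun t => f t - c * t) (deriv f t - c) t := fun t => by
    simpa using (hf t).hasDerivAt.fun_sub ((hasDerivAt_id' t).const_mul c)
  have hmono : Monotone fun t => f t - c * t :=
    monotone_of_deriv_nonneg (fun t => (hderiv t).differentiableAt)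
      fun t => (hderiv t).deriv ▸ sub_nonneg.2 (hle t)
  have hlin : Tendsto (fun t => f 0 + c * t) atTop atTop :=
    tendsto_atTop_add_const_left _ _ (tendsto_id.const_mul_atTop hc)
  refine tendsto_atTop_mono' atTop ?_ hlin
  filter_upwards [eventually_ge_atTop (0 : ℝ)] with t ht
  have := hmono ht
  simp only [mul_zero, sub_zero] at this
  linarith

theorem exists_sign_tendsto_of_deriv_sq_eq {U : ℝ → ℝ} (hU : ∀ x, 0 ≤ U x)
    (hU_lim : Tendsto U (cobounded ℝ) (𝓝 0)) {z : ℝ → ℝ} (hz : Differentiable ℝ z)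
    (hz' : Continuous (deriv z)) {E : ℝ} (hE : 0 < E)
    (henergy : ∀ t, deriv z t ^ 2 = 2 * E + 2 * U (z t)) :
    ∃ σ : ℝ, (σ = -1 ∨ σ = 1) ∧ Tendsto (fun t => σ * z t) atTop atTop ∧
      Tendsto (deriv z) atTop (𝓝 (σ * √(2 * E))) := by
  have hne : ∀ t, deriv z t ≠ 0 := fun t h => by nlinarith [henergy t, hU (z t)]
  obtain ⟨σ, hσ, hpos⟩ := exists_sign_mul_pos_of_continuous_of_ne_zero hz' hne 0
  have hspeed : ∀ t, σ * deriv z t = √(2 * E + 2 * U (z t)) := fun t => by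
    rw [← henergy, Real.sqrt_sq_eq_abs, ← abs_of_pos (hpos t), abs_mul]
    rcases hσ with rfl | rfl <;> norm_num
  have hescape : Tendsto (fun t => σ * z t) atTop atTop := by
    refine tendsto_atTop_of_le_deriv (c := √(2 * E)) (by positivity) (hz.const_mul σ) fun t => ?_
    rw [deriv_const_mul σ (hz t), hspeed]
    exact Real.sqrt_le_sqrt (by linarith [hU (z t)])
  have hcobounded : Tendsto z atTop (cobounded ℝ) := by
    rw [← tendsto_norm_atTop_iff_cobounded]
    refine tendsto_atTop_mono (fun t => ?_) hescape
    rcases hσ with rfl | rfl <;> simp [le_abs_self, neg_le_abs]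
  have hvel : Tendsto (fun t => σ * deriv z t) atTop (𝓝 √(2 * E)) := by
    have hlim := ((hU_lim.comp hcobounded).const_mul 2).const_add (2 * E)
    simpa only [hspeed, mul_zero, add_zero, Function.comp_def] using
      (Real.continuous_sqrt.tendsto _).comp hlim
  have hσ_sq : σ * σ = 1 := by rcases hσ with rfl | rfl <;> norm_num
  refine ⟨σ, hσ, hescape, ?_⟩
  simpa only [← mul_assoc, hσ_sq, one_mul] using hvel.const_mul σ

section Sitnikov

variable {ι : Type*} [Fintype ι] (m s : ι → ℝ)

/-- The Newtonian potential of the primaries `mᵢ` at distance `sᵢ` from the `z`-axis, with the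
sign convention of celestial mechanics (`U > 0`, `z'' = U'(z)`). -/
noncomputable def sitnikovForceFunction (x : ℝ) : ℝ :=
  ∑ i, m i * (s i ^ 2 + x ^ 2) ^ (-(1 / 2) : ℝ)

variable {m s}

theorem hasDerivAt_sitnikovForceFunction (hs : ∀ i, s i ≠ 0) (x : ℝ) :
    HasDerivAt (sitnikovForceFunction m s)
      (-∑ i, m i * x / (s i ^ 2 + x ^ 2) ^ ((3 : ℝ) / 2)) x := by
  rw [← Finset.sum_neg_distrib]
  refine HasDerivAt.fun_sum fun i _ => ?_
  have hpos : 0 < s i ^ 2 + x ^ 2 := by positivity [hs i]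
  have hbase : HasDerivAt (fun x => s i ^ 2 + x ^ 2) (2 * x) x := by
    simpa using ((hasDerivAt_id x).pow 2).const_add (s i ^ 2)
  refine ((hbase.rpow_const (p := -(1 / 2)) (Or.inl hpos.ne')).const_mul (m i)).congr_deriv ?_
  rw [show (-(1 / 2) : ℝ) - 1 = -(3 / 2) by norm_num, Real.rpow_neg hpos.le]
  field_simp

theorem sitnikovForceFunction_nonneg (hm : ∀ i, 0 ≤ m i) (x : ℝ) :
    0 ≤ sitnikovForceFunction m s x :=
  Finset.sum_nonneg fun i _ => mul_nonneg (hm i) (Real.rpow_nonneg (by positivity) _)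

theorem tendsto_sitnikovForceFunction_cobounded :
    Tendsto (sitnikovForceFunction m s) (cobounded ℝ) (𝓝 0) := by
  have hdist : ∀ i, Tendsto (fun x : ℝ => s i ^ 2 + x ^ 2) (cobounded ℝ) atTop := fun i =>
    tendsto_atTop_add_const_left _ _ <| by
      simpa only [Function.comp_def, Real.norm_eq_abs, sq_abs] using
        (tendsto_pow_atTop two_ne_zero).comp (tendsto_norm_cobounded_atTop (E := ℝ))
  unfold sitnikovForceFunction
  simpa only [Function.comp_def, mul_zero, Finset.sum_const_zero] using
    tendsto_finsetSum Finset.univ fun i _ =>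
      ((tendsto_rpow_neg_atTop (by norm_num : (0 : ℝ) < 1 / 2)).comp (hdist i)).const_mul (m i)

end Sitnikov

theorem sitnikov_positive_energy_hyperbolic_general
    (n : ℕ) (m s : Fin n → ℝ)
    (hm : ∀ i, 0 < m i) (hs : ∀ i, 0 < s i)
    (z : ℝ → ℝ) (hz : Differentiable ℝ z) (hz' : Differentiable ℝ (deriv z))
    (hode : ∀ t : ℝ, deriv (deriv z) t =
      -∑ i, m i * z t / (s i ^ 2 + z t ^ 2) ^ ((3 : ℝ) / 2))
    (E : ℝ)
    (hE : E = (deriv z 0) ^ 2 / 2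
      - ∑ i, m i * (s i ^ 2 + z 0 ^ 2) ^ (-(1 / 2) : ℝ))
    (hEpos : 0 < E) :
    ∃ σ : ℝ, (σ = -1 ∨ σ = 1) ∧
      Filter.Tendsto (fun t => σ * z t) Filter.atTop Filter.atTop ∧
      Filter.Tendsto (deriv z) Filter.atTop (nhds (σ * Real.sqrt (2 * E))) := by
  refine exists_sign_tendsto_of_deriv_sq_eq (U := sitnikovForceFunction m s)
    (sitnikovForceFunction_nonneg fun i => (hm i).le) tendsto_sitnikovForceFunction_cobounded
    hz hz'.continuous hEpos fun t => ?_
  have hconserved := deriv_sq_div_two_sub_eq_of_deriv_deriv_eq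
    (hasDerivAt_sitnikovForceFunction fun i => (hs i).ne') hz hz' hode t
  simp only [sitnikovForceFunction] at hconserved ⊢
  linarith [hE]

/-- Solutions of the Sitnikov equation with positive energy are hyperbolic:
for some sign `σ ∈ {−1, +1}`, `σ·z(t) → +∞` and `z'(t) → σ·√(2E)` as
`t → +∞`. -/
theorem sitnikov_positive_energy_hyperbolic
    (n : ℕ) (hn : 1 ≤ n) (m s : Fin n → ℝ)
    (hm : ∀ i, 0 < m i) (hs : ∀ i, 0 < s i)
    (z : ℝ → ℝ) (hz : Differentiable ℝ z) (hz' : Differentiable ℝ (deriv z))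
    (hode : ∀ t : ℝ, deriv (deriv z) t =
      -∑ i, m i * z t / (s i ^ 2 + z t ^ 2) ^ ((3 : ℝ) / 2))
    (E : ℝ)
    (hE : E = (deriv z 0) ^ 2 / 2
      - ∑ i, m i * (s i ^ 2 + z 0 ^ 2) ^ (-(1 / 2) : ℝ))
    (hEpos : 0 < E) :
    ∃ σ : ℝ, (σ = -1 ∨ σ = 1) ∧
      Filter.Tendsto (fun t => σ * z t) Filter.atTop Filter.atTop ∧
      Filter.Tendsto (deriv z) Filter.atTop (nhds (σ * Real.sqrt (2 * E))) :=
  sitnikov_positive_energy_hyperbolic_general n m s hm hs z hz hz' hode E hE hEpos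
end

section
/- Fix an integer n ≥ 1, masses m_1, …, m_n > 0 and radii s_1, …, s_n > 0, and set E_min = −∑_{i=1}^n m_i/s_i. For E ∈ (E_min, 0) let z_E be the unique positive solution of ∑_{i=1}^n m_i (s_i² + z²)^{-1/2} = −E and define T_0(E) = 2^{3/2} ∫_0^{z_E} (E + ∑_{i=1}^n m_i (s_i² + u²)^{-1/2})^{-1/2} du. Then T_0 is strictly increasing on (E_min, 0): if E_min < E_1 < E_2 < 0 then T_0(E_1) < T_0(E_2). -/
set_option maxHeartbeats 1000000

open Real Set MeasureTheory

noncomputable def sitD (s z t : ℝ) : ℝ :=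
  Real.sqrt (s^2+(t*z)^2) * Real.sqrt (s^2+z^2) *
    (Real.sqrt (s^2+z^2) + Real.sqrt (s^2+(t*z)^2))

lemma sitD_pos (s z t : ℝ) (hs : 0 < s) : 0 < sitD s z t := by
  unfold sitD
  have h1 : 0 < Real.sqrt (s^2+(t*z)^2) := Real.sqrt_pos.mpr (by positivity)
  have h2 : 0 < Real.sqrt (s^2+z^2) := Real.sqrt_pos.mpr (by positivity)
  positivity

lemma rpow_neg_half_eq (x : ℝ) (hx : 0 ≤ x) :
    x ^ (-(1/2) : ℝ) = (Real.sqrt x)⁻¹ := by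
  rw [Real.rpow_neg hx, Real.sqrt_eq_rpow]

lemma sit_term (s z t : ℝ) (hs : 0 < s) :
    (s^2+(t*z)^2) ^ (-(1/2) : ℝ) - (s^2+z^2) ^ (-(1/2) : ℝ)
      = z^2*(1-t^2) / sitD s z t := by
  have hB : 0 < Real.sqrt (s^2+(t*z)^2) := Real.sqrt_pos.mpr (by positivity)
  have hA : 0 < Real.sqrt (s^2+z^2) := Real.sqrt_pos.mpr (by positivity)
  have hB2 : Real.sqrt (s^2+(t*z)^2) ^ 2 = s^2+(t*z)^2 := Real.sq_sqrt (by positivity)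
  have hA2 : Real.sqrt (s^2+z^2) ^ 2 = s^2+z^2 := Real.sq_sqrt (by positivity)
  rw [rpow_neg_half_eq _ (by positivity), rpow_neg_half_eq _ (by positivity)]
  unfold sitD
  set B := Real.sqrt (s^2+(t*z)^2)
  set A := Real.sqrt (s^2+z^2)
  have hnum : z^2*(1-t^2) = A^2 - B^2 := by rw [hA2, hB2]; ring
  rw [hnum, eq_div_iff (by positivity)]
  field_simp
  ring

lemma sitD_mono (s z₁ z₂ t : ℝ) (hs : 0 < s) (hz₁ : 0 < z₁) (hz : z₁ < z₂)
    (ht : 0 ≤ t) : sitD s z₁ t < sitD s z₂ t := by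
  unfold sitD
  have hA : Real.sqrt (s^2+z₁^2) < Real.sqrt (s^2+z₂^2) :=
    Real.sqrt_lt_sqrt (by positivity) (by nlinarith)
  have hzz : z₁^2 ≤ z₂^2 := by nlinarith
  have hB : Real.sqrt (s^2+(t*z₁)^2) ≤ Real.sqrt (s^2+(t*z₂)^2) :=
    Real.sqrt_le_sqrt (by nlinarith [mul_nonneg (sq_nonneg t) (sub_nonneg.2 hzz)])
  have hB1 : 0 < Real.sqrt (s^2+(t*z₁)^2) := Real.sqrt_pos.mpr (by positivity)
  have hA1 : 0 < Real.sqrt (s^2+z₁^2) := Real.sqrt_pos.mpr (by positivity)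
  set B₁ := Real.sqrt (s^2+(t*z₁)^2)
  set A₁ := Real.sqrt (s^2+z₁^2)
  set B₂ := Real.sqrt (s^2+(t*z₂)^2)
  set A₂ := Real.sqrt (s^2+z₂^2)
  have h3 : A₁*(A₁+B₁) < A₂*(A₂+B₂) := by nlinarith
  nlinarith [mul_lt_mul_of_pos_left h3 (lt_of_lt_of_le hB1 hB),
             mul_le_mul_of_nonneg_right hB (by positivity : (0:ℝ) ≤ A₁*(A₁+B₁))]

lemma sitD_le (s z t : ℝ) (hs : 0 < s) (h : (t*z)^2 ≤ z^2) :
    sitD s z t ≤ 2 * Real.sqrt (s^2+z^2) ^ 3 := by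
  unfold sitD
  have hBA : Real.sqrt (s^2+(t*z)^2) ≤ Real.sqrt (s^2+z^2) :=
    Real.sqrt_le_sqrt (by linarith)
  have hB1 : 0 < Real.sqrt (s^2+(t*z)^2) := Real.sqrt_pos.mpr (by positivity)
  have hA1 : 0 < Real.sqrt (s^2+z^2) := Real.sqrt_pos.mpr (by positivity)
  set B := Real.sqrt (s^2+(t*z)^2)
  set A := Real.sqrt (s^2+z^2)
  nlinarith [mul_nonneg (mul_nonneg hA1.le (sub_nonneg.2 hBA)) (by positivity : (0:ℝ) ≤ 2*A+B)]

/-- The period function `T₀(E)` of the Sitnikov equation is strictly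
increasing on `(E_min, 0)`. -/
theorem sitnikov_period_strict_mono
    (n : ℕ) (hn : 1 ≤ n) (m s : Fin n → ℝ)
    (hm : ∀ i, 0 < m i) (hs : ∀ i, 0 < s i)
    (Emin : ℝ) (hEmin : Emin = -∑ i, m i / s i)
    (E₁ E₂ : ℝ) (h₁ : Emin < E₁) (h₁₂ : E₁ < E₂) (h₂ : E₂ < 0)
    (zE₁ zE₂ : ℝ) (hz₁ : 0 < zE₁) (hz₂ : 0 < zE₂)
    (hz₁eq : ∑ i, m i * (s i ^ 2 + zE₁ ^ 2) ^ (-(1 / 2) : ℝ) = -E₁)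
    (hz₂eq : ∑ i, m i * (s i ^ 2 + zE₂ ^ 2) ^ (-(1 / 2) : ℝ) = -E₂) :
    2 ^ ((3 : ℝ) / 2) *
      ∫ u in (0 : ℝ)..zE₁,
        (E₁ + ∑ i, m i * (s i ^ 2 + u ^ 2) ^ (-(1 / 2) : ℝ)) ^ (-(1 / 2) : ℝ) <
    2 ^ ((3 : ℝ) / 2) *
      ∫ u in (0 : ℝ)..zE₂,
        (E₂ + ∑ i, m i * (s i ^ 2 + u ^ 2) ^ (-(1 / 2) : ℝ)) ^ (-(1 / 2) : ℝ) := by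
  classical
  haveI : Nonempty (Fin n) := ⟨⟨0, hn⟩⟩
  set i₀ : Fin n := ⟨0, hn⟩ with hi₀
  -- the two (rescaled) integrands
  set g₁ : ℝ → ℝ := fun t =>
    zE₁ * (E₁ + ∑ i, m i * (s i ^ 2 + (t * zE₁) ^ 2) ^ (-(1/2) : ℝ)) ^ (-(1/2) : ℝ) with hg₁def
  set g₂ : ℝ → ℝ := fun t =>
    zE₂ * (E₂ + ∑ i, m i * (s i ^ 2 + (t * zE₂) ^ 2) ^ (-(1/2) : ℝ)) ^ (-(1/2) : ℝ) with hg₂def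
  -- zE₁ < zE₂
  have hzz : zE₁ < zE₂ := by
    by_contra hcon
    push_neg at hcon
    have hle : ∀ i ∈ Finset.univ, m i * (s i ^ 2 + zE₁ ^ 2) ^ (-(1/2) : ℝ)
        ≤ m i * (s i ^ 2 + zE₂ ^ 2) ^ (-(1/2) : ℝ) := by
      intro i _
      have hsi := hs i
      have hb : (0:ℝ) < s i ^ 2 + zE₂ ^ 2 := by positivity
      have h2 : s i ^ 2 + zE₂ ^ 2 ≤ s i ^ 2 + zE₁ ^ 2 := by nlinarith
      exact mul_le_mul_of_nonneg_left
        (Real.rpow_le_rpow_of_nonpos hb h2 (by norm_num)) (hm i).le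
    have hsum := Finset.sum_le_sum hle
    rw [hz₁eq, hz₂eq] at hsum
    linarith
  -- the key identity
  have key : ∀ (E z : ℝ), (∑ i, m i * (s i ^ 2 + z ^ 2) ^ (-(1/2) : ℝ)) = -E →
      ∀ t : ℝ, E + ∑ i, m i * (s i ^ 2 + (t * z) ^ 2) ^ (-(1/2) : ℝ)
        = ∑ i, m i * (z ^ 2 * (1 - t ^ 2) / sitD (s i) z t) := by
    intro E z hEz t
    have hE : E = -∑ i, m i * (s i ^ 2 + z ^ 2) ^ (-(1/2) : ℝ) := by linarith
    rw [hE, neg_add_eq_sub, ← Finset.sum_sub_distrib]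
    refine Finset.sum_congr rfl fun i _ => ?_
    rw [← mul_sub, sit_term (s i) z t (hs i)]
  have key₁ := key E₁ zE₁ hz₁eq
  have key₂ := key E₂ zE₂ hz₂eq
  -- positivity of the shifted potential sums
  have hSpos : ∀ (z t : ℝ), 0 < z → t^2 < 1 →
      0 < ∑ i, m i * ((1 - t ^ 2) / sitD (s i) z t) := by
    intro z t hz ht
    refine Finset.sum_pos (fun i _ => ?_) Finset.univ_nonempty
    have hD := sitD_pos (s i) z t (hs i)
    have h1t : 0 < 1 - t^2 := by linarith
    have hmi := hm i
    positivity
  have hfact : ∀ (z t : ℝ), ∑ i, m i * (z ^ 2 * (1 - t ^ 2) / sitD (s i) z t)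
      = z^2 * ∑ i, m i * ((1 - t ^ 2) / sitD (s i) z t) := by
    intro z t
    rw [Finset.mul_sum]
    exact Finset.sum_congr rfl fun i _ => by ring
  -- pointwise strict inequality on [0,1)
  have hmain : ∀ t : ℝ, 0 ≤ t → t < 1 → g₁ t < g₂ t := by
    intro t ht ht1
    have ht2 : t^2 < 1 := by nlinarith
    have hS : ∑ i, m i * ((1-t^2)/sitD (s i) zE₂ t) < ∑ i, m i * ((1-t^2)/sitD (s i) zE₁ t) := by
      refine Finset.sum_lt_sum_of_nonempty Finset.univ_nonempty fun i _ => ?_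
      have hD₁ := sitD_pos (s i) zE₁ t (hs i)
      have hDm := sitD_mono (s i) zE₁ zE₂ t (hs i) hz₁ hzz ht
      have h1t : 0 < 1 - t^2 := by linarith
      exact mul_lt_mul_of_pos_left (div_lt_div_of_pos_left h1t hD₁ hDm) (hm i)
    have hS₁ := hSpos zE₁ t hz₁ ht2
    have hS₂ := hSpos zE₂ t hz₂ ht2
    have e₁ : E₁ + ∑ i, m i * (s i ^ 2 + (t * zE₁) ^ 2) ^ (-(1/2) : ℝ)
        = zE₁^2 * ∑ i, m i * ((1 - t ^ 2) / sitD (s i) zE₁ t) := by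
      rw [key₁ t, hfact]
    have e₂ : E₂ + ∑ i, m i * (s i ^ 2 + (t * zE₂) ^ 2) ^ (-(1/2) : ℝ)
        = zE₂^2 * ∑ i, m i * ((1 - t ^ 2) / sitD (s i) zE₂ t) := by
      rw [key₂ t, hfact]
    have hP₁ : 0 < E₁ + ∑ i, m i * (s i ^ 2 + (t * zE₁) ^ 2) ^ (-(1/2) : ℝ) := by
      rw [e₁]; positivity
    have hP₂ : 0 < E₂ + ∑ i, m i * (s i ^ 2 + (t * zE₂) ^ 2) ^ (-(1/2) : ℝ) := by
      rw [e₂]; positivity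
    have hcross : zE₁^2 * (E₂ + ∑ i, m i * (s i ^ 2 + (t * zE₂) ^ 2) ^ (-(1/2) : ℝ))
        < zE₂^2 * (E₁ + ∑ i, m i * (s i ^ 2 + (t * zE₁) ^ 2) ^ (-(1/2) : ℝ)) := by
      rw [e₁, e₂]
      nlinarith [mul_lt_mul_of_pos_left hS (mul_pos (pow_pos hz₁ 2) (pow_pos hz₂ 2))]
    set X := E₁ + ∑ i, m i * (s i ^ 2 + (t * zE₁) ^ 2) ^ (-(1/2) : ℝ) with hX
    set Y := E₂ + ∑ i, m i * (s i ^ 2 + (t * zE₂) ^ 2) ^ (-(1/2) : ℝ) with hY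
    show zE₁ * X ^ (-(1/2) : ℝ) < zE₂ * Y ^ (-(1/2) : ℝ)
    rw [rpow_neg_half_eq _ hP₁.le, rpow_neg_half_eq _ hP₂.le, ← div_eq_mul_inv,
      ← div_eq_mul_inv, div_lt_div_iff₀ (Real.sqrt_pos.mpr hP₁) (Real.sqrt_pos.mpr hP₂)]
    calc zE₁ * Real.sqrt Y = Real.sqrt (zE₁^2 * Y) := by
          rw [Real.sqrt_mul (sq_nonneg _), Real.sqrt_sq hz₁.le]
      _ < Real.sqrt (zE₂^2 * X) := Real.sqrt_lt_sqrt (mul_nonneg (sq_nonneg _) hP₂.le) hcross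
      _ = zE₂ * Real.sqrt X := by rw [Real.sqrt_mul (sq_nonneg _), Real.sqrt_sq hz₂.le]
  -- values at t = 1
  have hg₁one : g₁ 1 = 0 := by
    have h0 : E₁ + ∑ i, m i * (s i ^ 2 + ((1:ℝ) * zE₁) ^ 2) ^ (-(1/2) : ℝ) = 0 := by
      rw [key₁ 1]; simp
    simp only [hg₁def]
    rw [h0, Real.zero_rpow (by norm_num), mul_zero]
  have hg₂one : g₂ 1 = 0 := by
    have h0 : E₂ + ∑ i, m i * (s i ^ 2 + ((1:ℝ) * zE₂) ^ 2) ^ (-(1/2) : ℝ) = 0 := by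
      rw [key₂ 1]; simp
    simp only [hg₂def]
    rw [h0, Real.zero_rpow (by norm_num), mul_zero]
  -- nonnegativity of g on [0,1]
  have hSnn : ∀ (z t : ℝ), 0 ≤ z → t^2 ≤ 1 →
      0 ≤ ∑ i, m i * (z ^ 2 * (1 - t ^ 2) / sitD (s i) z t) := by
    intro z t hz ht
    refine Finset.sum_nonneg fun i _ => ?_
    have hD := sitD_pos (s i) z t (hs i)
    have h1t : 0 ≤ 1 - t^2 := by linarith
    have hmi := (hm i).le
    positivity
  have hg₁nn : ∀ t : ℝ, 0 ≤ t → t ≤ 1 → 0 ≤ g₁ t := by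
    intro t ht ht1
    have ht2 : t^2 ≤ 1 := by nlinarith
    have h0 : 0 ≤ E₁ + ∑ i, m i * (s i ^ 2 + (t * zE₁) ^ 2) ^ (-(1/2) : ℝ) := by
      rw [key₁ t]; exact hSnn zE₁ t hz₁.le ht2
    exact mul_nonneg hz₁.le (Real.rpow_nonneg h0 _)
  have hg₂nn : ∀ t : ℝ, 0 ≤ t → t ≤ 1 → 0 ≤ g₂ t := by
    intro t ht ht1
    have ht2 : t^2 ≤ 1 := by nlinarith
    have h0 : 0 ≤ E₂ + ∑ i, m i * (s i ^ 2 + (t * zE₂) ^ 2) ^ (-(1/2) : ℝ) := by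
      rw [key₂ t]; exact hSnn zE₂ t hz₂.le ht2
    exact mul_nonneg hz₂.le (Real.rpow_nonneg h0 _)
  -- lower bound for the shifted potential at z = zE₂
  set A₀ : ℝ := Real.sqrt (s i₀ ^ 2 + zE₂ ^ 2) with hA₀
  have hA₀pos : 0 < A₀ := Real.sqrt_pos.mpr (by have := hs i₀; positivity)
  set c : ℝ := m i₀ * zE₂^2 / (2 * A₀^3) with hc
  have hcpos : 0 < c := by have := hm i₀; positivity
  have hPlow : ∀ t : ℝ, 0 ≤ t → t ≤ 1 →
      c * (1 - t) ≤ E₂ + ∑ i, m i * (s i ^ 2 + (t * zE₂) ^ 2) ^ (-(1/2) : ℝ) := by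
    intro t ht ht1
    have ht2 : t^2 ≤ 1 := by nlinarith
    rw [key₂ t]
    have hterm : ∀ i ∈ Finset.univ, 0 ≤ m i * (zE₂ ^ 2 * (1 - t ^ 2) / sitD (s i) zE₂ t) := by
      intro i _
      have hD := sitD_pos (s i) zE₂ t (hs i)
      have h1t : 0 ≤ 1 - t^2 := by linarith
      have hmi := (hm i).le
      positivity
    have h1 := Finset.single_le_sum hterm (Finset.mem_univ i₀)
    have hDle : sitD (s i₀) zE₂ t ≤ 2 * A₀^3 :=
      sitD_le (s i₀) zE₂ t (hs i₀)
        (by nlinarith [mul_nonneg (sub_nonneg.2 ht2) (sq_nonneg zE₂)])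
    have hDpos := sitD_pos (s i₀) zE₂ t (hs i₀)
    have hdd : zE₂^2 * (1 - t) / (2 * A₀^3) ≤ zE₂^2 * (1 - t^2) / sitD (s i₀) zE₂ t :=
      div_le_div₀ (by nlinarith [mul_nonneg (sub_nonneg.2 ht2) (sq_nonneg zE₂)])
        (by nlinarith [mul_nonneg (mul_nonneg (sq_nonneg zE₂) ht) (sub_nonneg.2 ht1)])
        hDpos hDle
    calc c * (1 - t) = m i₀ * (zE₂^2 * (1-t) / (2 * A₀^3)) := by rw [hc]; ring
      _ ≤ m i₀ * (zE₂ ^ 2 * (1 - t ^ 2) / sitD (s i₀) zE₂ t) :=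
          mul_le_mul_of_nonneg_left hdd (hm i₀).le
      _ ≤ _ := h1
  set C : ℝ := zE₂ * c ^ (-(1/2) : ℝ) with hC
  -- upper bound for g₂
  have hbound : ∀ t : ℝ, 0 ≤ t → t ≤ 1 → g₂ t ≤ C * (1-t) ^ (-(1/2) : ℝ) := by
    intro t ht ht1
    rcases eq_or_lt_of_le ht1 with h1 | h1
    · subst h1
      rw [hg₂one, show (1:ℝ)-1 = 0 by norm_num, Real.zero_rpow (by norm_num), mul_zero]
    · have hPt := hPlow t ht ht1
      have hct : 0 < c * (1-t) := mul_pos hcpos (by linarith)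
      have h3 := Real.rpow_le_rpow_of_nonpos hct hPt (by norm_num : (-(1/2):ℝ) ≤ 0)
      have h4 : (c*(1-t)) ^ (-(1/2):ℝ) = c ^ (-(1/2):ℝ) * (1-t) ^ (-(1/2):ℝ) :=
        Real.mul_rpow hcpos.le (by linarith)
      calc g₂ t = zE₂ * (E₂ + ∑ i, m i * (s i ^ 2 + (t * zE₂) ^ 2) ^ (-(1/2) : ℝ)) ^ (-(1/2) : ℝ) := rfl
        _ ≤ zE₂ * (c*(1-t)) ^ (-(1/2):ℝ) := mul_le_mul_of_nonneg_left h3 hz₂.le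
        _ = C * (1-t) ^ (-(1/2):ℝ) := by rw [h4, hC]; ring
  -- measurability
  have hmeas : ∀ (E z : ℝ), Measurable fun t : ℝ =>
      z * (E + ∑ i, m i * (s i ^ 2 + (t * z) ^ 2) ^ (-(1/2) : ℝ)) ^ (-(1/2) : ℝ) := by
    intro E z
    apply Measurable.const_mul
    apply Measurable.pow _ measurable_const
    apply Measurable.const_add
    apply Finset.measurable_sum
    intro i _
    apply Measurable.const_mul
    apply Measurable.pow _ measurable_const
    exact ((measurable_id.mul_const z).pow_const 2).const_add (s i ^ 2)
  -- integrability
  have hIb : IntervalIntegrable (fun t : ℝ => C * (1-t) ^ (-(1/2):ℝ)) volume 0 1 := by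
    have h0 : IntervalIntegrable (fun x : ℝ => x ^ (-(1/2):ℝ)) volume 1 0 :=
      intervalIntegral.intervalIntegrable_rpow' (by norm_num)
    have h1 := h0.comp_sub_left 1
    norm_num at h1
    exact h1.const_mul C
  have hI₂ : IntervalIntegrable g₂ volume 0 1 := by
    refine hIb.mono_fun' ((hmeas E₂ zE₂).aestronglyMeasurable) ?_
    filter_upwards [MeasureTheory.ae_restrict_mem measurableSet_uIoc] with t ht
    rw [Set.uIoc_of_le zero_le_one] at ht
    rw [Real.norm_eq_abs, abs_of_nonneg (hg₂nn t ht.1.le ht.2)]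
    exact hbound t ht.1.le ht.2
  have hI₁ : IntervalIntegrable g₁ volume 0 1 := by
    refine hI₂.mono_fun' ((hmeas E₁ zE₁).aestronglyMeasurable) ?_
    filter_upwards [MeasureTheory.ae_restrict_mem measurableSet_uIoc] with t ht
    rw [Set.uIoc_of_le zero_le_one] at ht
    rw [Real.norm_eq_abs, abs_of_nonneg (hg₁nn t ht.1.le ht.2)]
    rcases eq_or_lt_of_le ht.2 with h1 | h1
    · rw [h1, hg₁one, hg₂one]
    · exact (hmain t ht.1.le h1).le
  -- strict inequality of the rescaled integrals
  have hintlt : ∫ t in (0:ℝ)..1, g₁ t < ∫ t in (0:ℝ)..1, g₂ t := by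
    have hpos : 0 < ∫ t in (0:ℝ)..1, (g₂ t - g₁ t) :=
      intervalIntegral.intervalIntegral_pos_of_pos_on (hI₂.sub hI₁)
        (fun t ht => sub_pos.mpr (hmain t ht.1.le ht.2)) zero_lt_one
    rw [intervalIntegral.integral_sub hI₂ hI₁] at hpos
    linarith
  -- substitution u = t * z
  have hsubst : ∀ (E z : ℝ), 0 < z →
      (∫ u in (0:ℝ)..z, (E + ∑ i, m i * (s i ^ 2 + u ^ 2) ^ (-(1/2) : ℝ)) ^ (-(1/2) : ℝ))
      = ∫ t in (0:ℝ)..1, z * (E + ∑ i, m i * (s i ^ 2 + (t*z) ^ 2) ^ (-(1/2) : ℝ)) ^ (-(1/2) : ℝ) := by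
    intro E z hz
    have h := intervalIntegral.smul_integral_comp_mul_right (a := 0) (b := 1)
      (fun u => (E + ∑ i, m i * (s i ^ 2 + u ^ 2) ^ (-(1/2) : ℝ)) ^ (-(1/2) : ℝ)) z
    rw [zero_mul, one_mul] at h
    rw [← h, smul_eq_mul, ← intervalIntegral.integral_const_mul]
  rw [hsubst E₁ zE₁ hz₁, hsubst E₂ zE₂ hz₂]
  have h2pos : (0:ℝ) < 2 ^ ((3:ℝ)/2) := Real.rpow_pos_of_pos (by norm_num) _
  simp only [hg₁def, hg₂def] at hintlt
  exact mul_lt_mul_of_pos_left hintlt h2pos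
end

section
/- Fix an integer n ≥ 1, masses m_1, …, m_n > 0 and radii s_1, …, s_n > 0, and set T_min = 2π (∑_{i=1}^n m_i/s_i³)^{-1/2}. If z : ℝ → ℝ is a nonconstant twice differentiable solution of z''(t) = −∑_{i=1}^n m_i z(t)/(s_i² + z(t)²)^{3/2} and T > 0 satisfies z(t + T) = z(t) for all t ∈ ℝ, then T > T_min. -/
/-!
Write the equation as `z'' = -q(t) z` with `q(t) = ∑ mᵢ / (sᵢ² + z(t)²)^{3/2}`, so that
`0 ≤ q(t) < K := ∑ mᵢ / sᵢ³` wherever `z(t) ≠ 0`. A nonconstant periodic solution changes sign: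
if `z ≤ 0`, then `z'` is monotone and periodic, hence constant, hence zero by Rolle. So one
period contains a positive and a negative arch of `z`, and comparing with `sin (√K t)` (a
Sturm argument on the Wronskian) shows that each arch is longer than `π / √K`.
-/

open Set Real

theorem Function.Periodic.deriv {𝕜 F : Type*} [NontriviallyNormedField 𝕜] [NormedAddCommGroup F]
    [NormedSpace 𝕜 F] {f : 𝕜 → F} {c : 𝕜} (hf : Function.Periodic f c) :
    Function.Periodic (deriv f) c := fun x => by
  rw [← deriv_comp_add_const, hf.funext]

theorem Function.Periodic.map_toIcoMod {β : Type*} {f : ℝ → β} {T : ℝ} (hT : 0 < T)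
    (hf : Function.Periodic f T) (a x : ℝ) : f (toIcoMod hT a x) = f x :=
  hf.sub_zsmul_eq _

theorem Monotone.apply_eq_of_periodic {β : Type*} [PartialOrder β] {f : ℝ → β} (hf : Monotone f)
    {T : ℝ} (hT : 0 < T) (hper : Function.Periodic f T) (a b : ℝ) : f a = f b := by
  wlog hab : a ≤ b generalizing a b
  · exact (this b a (le_of_not_ge hab)).symm
  obtain ⟨n, hn⟩ := exists_nat_ge ((b - a) / T)
  refine le_antisymm (hf hab) ?_
  calc f b ≤ f (a + n * T) := hf (by rw [div_le_iff₀ hT] at hn; linarith)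
    _ = f a := hper.nat_mul n a

theorem HasDerivAt.nonpos_of_le_on_Ioo {f : ℝ → ℝ} {f' a b : ℝ} (hf : HasDerivAt f f' b)
    (hab : a < b) (hle : ∀ t ∈ Ioo a b, f b ≤ f t) : f' ≤ 0 := by
  refine le_of_tendsto (hasDerivAt_iff_tendsto_slope_left_right.1 hf).1 ?_
  filter_upwards [Ioo_mem_nhdsLT hab] with t ht
  rw [slope_def_field]
  exact div_nonpos_of_nonneg_of_nonpos (by linarith [hle t ht]) (by linarith [ht.2])

section Arches

variable {f : ℝ → ℝ}

theorem exists_zero_and_pos_on_Ioc (hf : Continuous f) {l b : ℝ} (hlb : l ≤ b) (hl : f l = 0)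
    (hb : 0 < f b) : ∃ a ∈ Ico l b, f a = 0 ∧ ∀ t ∈ Ioc a b, 0 < f t := by
  have hcpt : IsCompact (Icc l b ∩ f ⁻¹' {0}) :=
    isCompact_Icc.inter_right (isClosed_singleton.preimage hf)
  obtain ⟨a, ⟨ha, hfa⟩, hmax⟩ := hcpt.exists_isGreatest ⟨l, left_mem_Icc.2 hlb, hl⟩
  have hab : a < b := ha.2.lt_of_ne (by rintro rfl; exact hb.ne' hfa)
  refine ⟨a, ⟨ha.1, hab⟩, hfa, fun t ht => ?_⟩
  by_contra! hft
  obtain ⟨u, hu, hfu⟩ := intermediate_value_Icc ht.2 hf.continuousOn ⟨hft, hb.le⟩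
  have : u ≤ a := hmax ⟨⟨ha.1.trans (ht.1.le.trans hu.1), hu.2⟩, hfu⟩
  linarith [ht.1, hu.1]

theorem exists_zero_and_pos_on_Ico (hf : Continuous f) {b r : ℝ} (hbr : b ≤ r) (hr : f r = 0)
    (hb : 0 < f b) : ∃ c ∈ Ioc b r, f c = 0 ∧ ∀ t ∈ Ico b c, 0 < f t := by
  obtain ⟨c, hc, hfc, hpos⟩ := exists_zero_and_pos_on_Ioc (f := fun t => f (-t))
    (hf.comp continuous_neg) (neg_le_neg hbr) (by simpa) (by simpa)
  refine ⟨-c, ⟨lt_neg.1 hc.2, neg_le.1 hc.1⟩, hfc, fun t ht => ?_⟩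
  simpa using hpos (-t) ⟨lt_neg.1 ht.2, neg_le_neg ht.1⟩

theorem exists_zero_zero_and_pos_on_Ioo (hf : Continuous f) {l p r : ℝ} (hlp : l ≤ p)
    (hpr : p ≤ r) (hl : f l = 0) (hr : f r = 0) (hp : 0 < f p) :
    ∃ a b, l ≤ a ∧ a < p ∧ p < b ∧ b ≤ r ∧ f a = 0 ∧ f b = 0 ∧ ∀ t ∈ Ioo a b, 0 < f t := by
  obtain ⟨a, ⟨hla, hap⟩, hfa, hposa⟩ := exists_zero_and_pos_on_Ioc hf hlp hl hp
  obtain ⟨b, ⟨hpb, hbr⟩, hfb, hposb⟩ := exists_zero_and_pos_on_Ico hf hpr hr hp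
  refine ⟨a, b, hla, hap, hpb, hbr, hfa, hfb, fun t ht => ?_⟩
  rcases le_total t p with htp | hpt
  exacts [hposa t ⟨ht.1, htp⟩, hposb t ⟨hpt, ht.2⟩]

theorem Function.Periodic.exists_pos_arch_and_neg_arch (hf : Continuous f) {T : ℝ} (hT : 0 < T)
    (hper : Function.Periodic f T) {p p' : ℝ} (hp : 0 < f p) (hp' : f p' < 0) :
    ∃ a b c d, b ≤ c ∧ d - a ≤ T ∧
      (a < b ∧ f a = 0 ∧ f b = 0 ∧ ∀ t ∈ Ioo a b, 0 < f t) ∧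
      (c < d ∧ f c = 0 ∧ f d = 0 ∧ ∀ t ∈ Ioo c d, f t < 0) := by
  obtain ⟨x₀, hx₀⟩ : ∃ x₀, f x₀ = 0 := intermediate_value_univ p' p hf ⟨hp'.le, hp.le⟩
  obtain ⟨hx₀p₁, hp₁x₀⟩ := toIcoMod_mem_Ico hT x₀ p
  obtain ⟨a, b, hx₀a, hap₁, hp₁b, hbx₀, hfa, hfb, hpos⟩ :=
    exists_zero_zero_and_pos_on_Ioo hf hx₀p₁ hp₁x₀.le hx₀ (by rwa [hper x₀])
      (by rwa [hper.map_toIcoMod])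
  set p₂ := toIcoMod hT a p'
  have hfp₂ : f p₂ < 0 := by rwa [hper.map_toIcoMod]
  obtain ⟨hap₂, hp₂a⟩ := toIcoMod_mem_Ico hT a p'
  have hbp₂ : b < p₂ := by
    by_contra! hp₂b
    have hap₂' : a < p₂ := hap₂.lt_of_ne (ne_of_apply_ne f (hfa ▸ hfp₂.ne'))
    have hp₂b' : p₂ < b := hp₂b.lt_of_ne (ne_of_apply_ne f (hfb ▸ hfp₂.ne))
    linarith [hpos p₂ ⟨hap₂', hp₂b'⟩]
  obtain ⟨c, d, hbc, hcp₂, hp₂d, hda, hfc, hfd, hneg⟩ :=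
    exists_zero_zero_and_pos_on_Ioo (f := -f) hf.neg hbp₂.le hp₂a.le (by simp [hfb])
      (by simp [hper a, hfa]) (by simpa using hfp₂)
  refine ⟨a, b, c, d, hbc, by linarith, ⟨hap₁.trans hp₁b, hfa, hfb, hpos⟩,
    ⟨hcp₂.trans hp₂d, by simpa using hfc, by simpa using hfd, fun t ht => ?_⟩⟩
  simpa using hneg t ht

end Arches

structure IsHillSolution (q z : ℝ → ℝ) : Prop where
  differentiable : Differentiable ℝ z
  differentiable_deriv : Differentiable ℝ (deriv z)
  deriv_deriv : ∀ t, deriv (deriv z) t = -(q t * z t)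

namespace IsHillSolution

variable {q z : ℝ → ℝ}

theorem neg (h : IsHillSolution q z) : IsHillSolution q (-z) where
  differentiable := h.differentiable.neg
  differentiable_deriv := by
    rw [deriv.neg']
    exact h.differentiable_deriv.neg
  deriv_deriv t := by
    rw [deriv.neg', deriv.fun_neg, h.deriv_deriv, Pi.neg_apply, mul_neg]

theorem hasDerivAt_deriv (h : IsHillSolution q z) (t : ℝ) :
    HasDerivAt (deriv z) (-(q t * z t)) t := by
  simpa only [h.deriv_deriv] using (h.differentiable_deriv t).hasDerivAt

theorem exists_pos (h : IsHillSolution q z) (hq : ∀ t, 0 ≤ q t) {T : ℝ} (hT : 0 < T)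
    (hper : Function.Periodic z T) (hnc : ∃ t₁ t₂, z t₁ ≠ z t₂) : ∃ t, 0 < z t := by
  by_contra! hnonpos
  have hmono : Monotone (deriv z) := monotone_of_deriv_nonneg h.differentiable_deriv fun t => by
    rw [h.deriv_deriv]
    exact neg_nonneg.2 (mul_nonpos_of_nonneg_of_nonpos (hq t) (hnonpos t))
  obtain ⟨ξ, -, hξ⟩ := exists_deriv_eq_zero (lt_add_of_pos_right 0 hT)
    h.differentiable.continuous.continuousOn (hper 0).symm
  have hderiv : ∀ t, deriv z t = 0 := fun t =>
    (hmono.apply_eq_of_periodic hT hper.deriv t ξ).trans hξ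
  obtain ⟨t₁, t₂, hne⟩ := hnc
  exact hne (is_const_of_deriv_eq_zero h.differentiable hderiv t₁ t₂)

theorem pi_div_sqrt_lt_of_arch (h : IsHillSolution q z) {K : ℝ} (hK : 0 < K) {a b : ℝ}
    (hab : a < b) (hza : z a = 0) (hzb : z b = 0) (hpos : ∀ t ∈ Ioo a b, 0 < z t)
    (hqK : ∀ t ∈ Ioo a b, q t < K) : π / √K < b - a := by
  set ω := √K
  have hω : 0 < ω := sqrt_pos.2 hK
  by_contra! hle
  replace hle : ω * (b - a) ≤ π := by rwa [le_div_iff₀ hω, mul_comm] at hle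
  have hsin : ∀ t ∈ Ioo a b, 0 < sin (ω * (t - a)) := fun t ht =>
    sin_pos_of_pos_of_lt_pi (mul_pos hω (by linarith [ht.1]))
      (lt_of_lt_of_le (mul_lt_mul_of_pos_left (by linarith [ht.2]) hω) hle)
  -- the Wronskian of `z` and `sin (ω (t - a))`, a solution of `φ'' = -K φ`
  set W : ℝ → ℝ := fun t => deriv z t * sin (ω * (t - a)) - z t * (ω * cos (ω * (t - a)))
  have hW : ∀ t, HasDerivAt W ((K - q t) * (z t * sin (ω * (t - a)))) t := by
    intro t
    have hu : HasDerivAt (fun t => ω * (t - a)) ω t := by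
      simpa using ((hasDerivAt_id t).sub_const a).const_mul ω
    refine ((h.hasDerivAt_deriv t).mul ((hasDerivAt_sin _).comp t hu)).sub
      ((h.differentiable t).hasDerivAt.mul (((hasDerivAt_cos _).comp t hu).const_mul ω))
      |>.congr_deriv ?_
    simp only [Function.comp_apply]
    rw [← mul_self_sqrt hK.le]
    ring
  have hWmono : StrictMonoOn W (Icc a b) := by
    refine strictMonoOn_of_deriv_pos (convex_Icc a b)
      (fun t _ => (hW t).continuousAt.continuousWithinAt) fun t ht => ?_
    rw [interior_Icc] at ht
    rw [(hW t).deriv]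
    exact mul_pos (by linarith [hqK t ht]) (mul_pos (hpos t ht) (hsin t ht))
  have hWb : W b ≤ 0 := by
    have hdzb : deriv z b ≤ 0 := (h.differentiable b).hasDerivAt.nonpos_of_le_on_Ioo hab
      fun t ht => hzb ▸ (hpos t ht).le
    have hsinb : 0 ≤ sin (ω * (b - a)) :=
      sin_nonneg_of_nonneg_of_le_pi (mul_nonneg hω.le (by linarith)) hle
    simpa [W, hzb] using mul_nonpos_of_nonpos_of_nonneg hdzb hsinb
  have hWab := hWmono (left_mem_Icc.2 hab.le) (right_mem_Icc.2 hab.le) hab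
  simp only [W, hza, sub_self, mul_zero, sin_zero, zero_mul] at hWab
  linarith

theorem two_mul_pi_div_sqrt_lt_period (h : IsHillSolution q z) (hq : ∀ t, 0 ≤ q t) {K : ℝ}
    (hK : 0 < K) (hqK : ∀ t, z t ≠ 0 → q t < K) {T : ℝ} (hT : 0 < T)
    (hper : Function.Periodic z T) (hnc : ∃ t₁ t₂, z t₁ ≠ z t₂) : 2 * (π / √K) < T := by
  obtain ⟨p, hp⟩ := h.exists_pos hq hT hper hnc
  obtain ⟨p', hp'⟩ : ∃ t, z t < 0 := by
    obtain ⟨t₁, t₂, hne⟩ := hnc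
    obtain ⟨t, ht⟩ := h.neg.exists_pos hq hT (fun t => congrArg Neg.neg (hper t))
      ⟨t₁, t₂, by simpa using hne⟩
    exact ⟨t, by simpa using ht⟩
  obtain ⟨a, b, c, d, hbc, hda, ⟨hab, hza, hzb, hpos⟩, ⟨hcd, hzc, hzd, hneg⟩⟩ :=
    hper.exists_pos_arch_and_neg_arch h.differentiable.continuous hT hp hp'
  have hposArch := h.pi_div_sqrt_lt_of_arch hK hab hza hzb hpos fun t ht =>
    hqK t (hpos t ht).ne'
  have hnegArch := h.neg.pi_div_sqrt_lt_of_arch hK hcd (by simp [hzc]) (by simp [hzd])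
    (fun t ht => by simpa using hneg t ht) fun t ht => hqK t (hneg t ht).ne
  linarith

end IsHillSolution

theorem pow_three_lt_rpow_three_halves {s x : ℝ} (hs : 0 < s) (hx : x ≠ 0) :
    s ^ 3 < (s ^ 2 + x ^ 2) ^ ((3 : ℝ) / 2) := by
  have hs3 : s ^ 3 = (s ^ 2) ^ ((3 : ℝ) / 2) := by
    rw [← rpow_natCast s 2, ← rpow_mul hs.le, ← rpow_natCast s 3]
    norm_num
  rw [hs3]
  exact rpow_lt_rpow (by positivity) (by simp [hx, sq_pos_of_ne_zero]) (by norm_num)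

/-- Any period of a nonconstant solution of the Sitnikov equation exceeds
`T_min = 2π (∑ m_i/s_i³)^{-1/2}`. -/
theorem sitnikov_period_gt_Tmin
    (n : ℕ) (hn : 1 ≤ n) (m s : Fin n → ℝ)
    (hm : ∀ i, 0 < m i) (hs : ∀ i, 0 < s i)
    (Tmin : ℝ) (hTmin : Tmin = 2 * Real.pi * (∑ i, m i / s i ^ 3) ^ (-(1 / 2) : ℝ))
    (z : ℝ → ℝ) (hz : Differentiable ℝ z) (hz' : Differentiable ℝ (deriv z))
    (hode : ∀ t : ℝ, deriv (deriv z) t =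
      -∑ i, m i * z t / (s i ^ 2 + z t ^ 2) ^ ((3 : ℝ) / 2))
    (hnc : ∃ t₁ t₂ : ℝ, z t₁ ≠ z t₂)
    (T : ℝ) (hT : 0 < T) (hper : ∀ t : ℝ, z (t + T) = z t) :
    T > Tmin := by
  set K := ∑ i, m i / s i ^ 3
  set q : ℝ → ℝ := fun t => ∑ i, m i / (s i ^ 2 + z t ^ 2) ^ ((3 : ℝ) / 2)
  have hne : (Finset.univ : Finset (Fin n)).Nonempty := Finset.univ_nonempty_iff.2 ⟨⟨0, hn⟩⟩
  have hK : 0 < K := Finset.sum_pos (fun i _ => div_pos (hm i) (pow_pos (hs i) 3)) hne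
  have hsol : IsHillSolution q z := ⟨hz, hz', fun t => by
    rw [hode, Finset.sum_mul]
    exact congrArg Neg.neg (Finset.sum_congr rfl fun i _ => by ring)⟩
  have hq : ∀ t, 0 ≤ q t := fun t => Finset.sum_nonneg fun i _ => by
    have := hm i
    positivity
  have hqK : ∀ t, z t ≠ 0 → q t < K := fun t hzt => Finset.sum_lt_sum_of_nonempty hne fun i _ =>
    div_lt_div_of_pos_left (hm i) (pow_pos (hs i) 3) (pow_three_lt_rpow_three_halves (hs i) hzt)
  have hTmin' : Tmin = 2 * (π / √K) := by
    rw [hTmin, rpow_neg hK.le, ← sqrt_eq_rpow]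
    ring
  rw [hTmin']
  exact hsol.two_mul_pi_div_sqrt_lt_period hq hK hqK hT hper hnc
end

section
/- Fix an integer n ≥ 1, masses m_1, …, m_n > 0, radii s_1, …, s_n > 0 and λ > 0. Then the following are equivalent: (i) there exists a nonconstant twice differentiable solution z : ℝ → ℝ of z''(t) = −∑_{i=1}^n m_i z(t)/(s_i² + z(t)²)^{3/2} with z(t + 2π/√λ) = z(t) for all t (a synchronous solution, having the same period as the rigid motion of primaries with angular velocity √λ); (ii) there exists c > 0 such that ∑_{i=1}^n m_i (s_i² + c²)^{-3/2} = λ (the pyramidal central configuration condition for a zero mass at height c above the plane); (iii) λ < ∑_{i=1}^n m_i/s_i³. -/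
/-!
Write `stiffness c = ∑ mᵢ (sᵢ² + c²)^(-3/2)`, so that the Sitnikov equation reads
`z'' = -stiffness z · z`. As `stiffness` decreases strictly in `|c|` from `∑ mᵢ / sᵢ³` to `0`,
(ii) and (iii) are equivalent by the intermediate value theorem.

If `z` is a nonconstant `T`-periodic solution, energy conservation forces it to take both signs
(if `z ≤ 0`, its velocity vanishes at its maximum and energy conservation pins it there). On each
nodal arc, Sturm comparison with `sin (√μ t)`, where `μ = stiffness 0 > stiffness (z t)`, shows
that the arc is longer than `π / √μ`; a period contains two arcs, so `T > 2π / √μ`, which is (iii).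

Conversely, a solution of amplitude `a` is sought as `z = a sin θ`. With `V` the potential, the
energy relation `z'² = 2 (V z - V a)` becomes the regular autonomous equation `θ' = Φₐ(θ)`, solved
by inverting the travel time `∫ dθ / Φₐ`. The resulting period `∫₀^{2π} dθ / Φₐ` depends
continuously on `a`, is at most `2π / √(stiffness a)` because `Φₐ² ≥ stiffness a`, and grows
linearly in `a`; so when `stiffness c = λ` some amplitude `a ≥ c` has period exactly `2π / √λ`.
-/

open Real Set Filter Topology Function

lemma IsPreconnected.pos_or_neg {X : Type*} [TopologicalSpace X] {S : Set X}
    (hS : IsPreconnected S) {f : X → ℝ} (hf : ContinuousOn f S) (hne : ∀ x ∈ S, f x ≠ 0) :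
    (∀ x ∈ S, 0 < f x) ∨ ∀ x ∈ S, f x < 0 := by
  by_contra! h
  obtain ⟨⟨x, hx, hfx⟩, y, hy, hfy⟩ := h
  obtain ⟨t, ht, hft⟩ := hS.intermediate_value hx hy hf ⟨hfx, hfy⟩
  exact hne t ht hft

section Sturm

variable {z z' q : ℝ → ℝ} {μ : ℝ}

theorem pi_lt_sqrt_mul_of_pos_on_Ioo {a b : ℝ} (hab : a < b)
    (hz : ∀ t, HasDerivAt z (z' t) t) (hz' : ∀ t, HasDerivAt z' (-(q t * z t)) t)
    (ha : z a = 0) (hb : z b = 0) (hpos : ∀ t ∈ Ioo a b, 0 < z t)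
    (hq : ∀ t ∈ Ioo a b, q t < μ) : π < √μ * (b - a) := by
  by_contra! hle
  set ω := π / (b - a)
  have hω : 0 < ω := div_pos pi_pos (sub_pos.2 hab)
  have hωba : ω * (b - a) = π := div_mul_cancel₀ _ (sub_pos.2 hab).ne'
  have hμω : μ ≤ ω ^ 2 := by
    rcases le_or_gt μ 0 with hμ | hμ
    · exact hμ.trans (sq_nonneg ω)
    · rw [← sq_sqrt hμ.le]
      exact pow_le_pow_left₀ (sqrt_nonneg μ) ((le_div_iff₀ (sub_pos.2 hab)).2 hle) 2
  have hsin : ∀ t ∈ Ioo a b, 0 < sin (ω * (t - a)) := fun t ht =>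
    sin_pos_of_pos_of_lt_pi (mul_pos hω (sub_pos.2 ht.1))
      (hωba ▸ mul_lt_mul_of_pos_left (by linarith [ht.2]) hω)
  -- The Wronskian of `z` with the comparison solution `sin (ω (t - a))` vanishes at both ends
  -- but strictly decreases in between.
  let W t := z t * (ω * cos (ω * (t - a))) - z' t * sin (ω * (t - a))
  have hW : ∀ t, HasDerivAt W (-((ω ^ 2 - q t) * z t * sin (ω * (t - a)))) t := by
    intro t
    have hθ : HasDerivAt (fun t => ω * (t - a)) ω t := by
      simpa using ((hasDerivAt_id t).sub_const a).const_mul ω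
    exact (((hz t).fun_mul (hθ.cos.const_mul ω)).fun_sub ((hz' t).fun_mul hθ.sin)).congr_deriv
      (by ring)
  have hanti : StrictAntiOn W (Icc a b) := by
    refine strictAntiOn_of_deriv_neg (convex_Icc a b)
      (HasDerivAt.continuousOn fun t _ => hW t) fun t ht => ?_
    rw [interior_Icc] at ht
    rw [(hW t).deriv, neg_lt_zero]
    have := hq t ht
    exact mul_pos (mul_pos (by nlinarith) (hpos t ht)) (hsin t ht)
  have := hanti (left_mem_Icc.2 hab.le) (right_mem_Icc.2 hab.le) hab
  simp [W, ha, hb, hωba] at this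

theorem pi_lt_sqrt_mul_of_ne_zero_on_Ioo (hz : ∀ t, HasDerivAt z (z' t) t)
    (hz' : ∀ t, HasDerivAt z' (-(q t * z t)) t) (hq : ∀ t, z t ≠ 0 → q t < μ) {a b : ℝ}
    (hab : a < b) (ha : z a = 0) (hb : z b = 0) (hne : ∀ t ∈ Ioo a b, z t ≠ 0) :
    π < √μ * (b - a) := by
  have hcont : Continuous z := continuous_iff_continuousAt.2 fun t => (hz t).continuousAt
  rcases isPreconnected_Ioo.pos_or_neg hcont.continuousOn hne with hpos | hneg
  · exact pi_lt_sqrt_mul_of_pos_on_Ioo hab hz hz' ha hb hpos fun t ht => hq t (hne t ht)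
  · refine pi_lt_sqrt_mul_of_pos_on_Ioo hab (fun t => (hz t).neg) (fun t => ?_)
      (by simp [ha]) (by simp [hb]) (fun t ht => neg_pos.2 (hneg t ht))
      fun t ht => hq t (hne t ht)
    exact (hz' t).fun_neg.congr_deriv (by rw [Pi.neg_apply]; ring)

theorem exists_Ioo_ne_zero {f : ℝ → ℝ} (hf : Continuous f) {a b x : ℝ} (hax : a ≤ x) (hxb : x ≤ b)
    (ha : f a = 0) (hb : f b = 0) (hx : f x ≠ 0) :
    ∃ α β, a ≤ α ∧ α < x ∧ x < β ∧ β ≤ b ∧ f α = 0 ∧ f β = 0 ∧ ∀ t ∈ Ioo α β, f t ≠ 0 := by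
  set L := Icc a x ∩ f ⁻¹' {0}
  set R := Icc x b ∩ f ⁻¹' {0}
  have hL : IsCompact L := isCompact_Icc.inter_right (isClosed_singleton.preimage hf)
  have hR : IsCompact R := isCompact_Icc.inter_right (isClosed_singleton.preimage hf)
  have hLα : sSup L ∈ L := hL.sSup_mem ⟨a, ⟨le_rfl, hax⟩, ha⟩
  have hRβ : sInf R ∈ R := hR.sInf_mem ⟨b, ⟨hxb, le_rfl⟩, hb⟩
  have hαx : sSup L < x := lt_of_le_of_ne hLα.1.2 fun h => hx (h ▸ hLα.2)
  have hxβ : x < sInf R := lt_of_le_of_ne hRβ.1.1 fun h => hx (h ▸ hRβ.2)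
  refine ⟨sSup L, sInf R, hLα.1.1, hαx, hxβ, hRβ.1.2, hLα.2, hRβ.2, fun t ht h0 => ?_⟩
  rcases le_total t x with htx | hxt
  · exact ht.1.not_ge (le_csSup hL.bddAbove ⟨⟨hLα.1.1.trans ht.1.le, htx⟩, h0⟩)
  · exact ht.2.not_ge (csInf_le hR.bddBelow ⟨⟨hxt, ht.2.le.trans hRβ.1.2⟩, h0⟩)

theorem two_pi_lt_sqrt_mul_of_periodic (hz : ∀ t, HasDerivAt z (z' t) t)
    (hz' : ∀ t, HasDerivAt z' (-(q t * z t)) t) (hq : ∀ t, z t ≠ 0 → q t < μ) {T : ℝ}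
    (hper : Periodic z T) (hT : 0 < T) (hpos : ∃ t, 0 < z t) (hneg : ∃ t, z t < 0) :
    2 * π < √μ * T := by
  have hcont : Continuous z := continuous_iff_continuousAt.2 fun t => (hz t).continuousAt
  obtain ⟨p, hp⟩ := hpos
  obtain ⟨n', hn'⟩ := hneg
  obtain ⟨n, ⟨hpn, hnp⟩, hzn⟩ := hper.exists_mem_Ico hT n' p
  rw [hzn] at hn'
  obtain ⟨t₀, ⟨hpt₀, ht₀n⟩, hzt₀⟩ := intermediate_value_Icc' hpn hcont.continuousOn ⟨hn'.le, hp.le⟩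
  have hzT : z (t₀ + T) = 0 := (hper t₀).trans hzt₀
  -- In the window `[t₀, t₀ + T]`, the negative value at `n` and the positive value at `p + T`
  -- lie on disjoint nodal arcs, each longer than `π / √μ`.
  have hpT : 0 < z (p + T) := (hper p).symm ▸ hp
  obtain ⟨α₁, β₁, htα₁, hα₁n, hnβ₁, -, hzα₁, hzβ₁, hne₁⟩ :=
    exists_Ioo_ne_zero hcont ht₀n (by linarith) hzt₀ hzT hn'.ne
  obtain ⟨α₂, β₂, -, hα₂p, hpβ₂, hβ₂T, hzα₂, hzβ₂, hne₂⟩ :=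
    exists_Ioo_ne_zero hcont (x := p + T) (by linarith) (by linarith) hzt₀ hzT hpT.ne'
  have hβ₁p : β₁ ≤ p + T := by
    by_contra! h
    rcases isPreconnected_Ioo.pos_or_neg hcont.continuousOn hne₁ with hpos | hneg
    · exact (hpos n ⟨hα₁n, hnβ₁⟩).not_gt hn'
    · exact (hneg (p + T) ⟨by linarith, h⟩).not_gt hpT
  have hβ₁α₂ : β₁ ≤ α₂ := by
    by_contra! h
    exact hne₂ β₁ ⟨h, hβ₁p.trans_lt hpβ₂⟩ hzβ₁
  have h₁ := pi_lt_sqrt_mul_of_ne_zero_on_Ioo hz hz' hq (hα₁n.trans hnβ₁) hzα₁ hzβ₁ hne₁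
  have h₂ := pi_lt_sqrt_mul_of_ne_zero_on_Ioo hz hz' hq (hα₂p.trans hpβ₂) hzα₂ hzβ₂ hne₂
  nlinarith [sqrt_nonneg μ]

end Sturm

section AutonomousODE

variable {f : ℝ → ℝ}

lemma sub_div_le_integral_inv {M a b : ℝ} (hf : Continuous f) (hpos : ∀ x, 0 < f x)
    (hM : ∀ x, f x ≤ M) (hab : a ≤ b) : (b - a) / M ≤ ∫ x in a..b, (f x)⁻¹ := by
  have hg : Continuous fun x => (f x)⁻¹ := hf.inv₀ fun x => (hpos x).ne'
  have := intervalIntegral.integral_mono_on (μ := MeasureTheory.volume) hab intervalIntegrable_const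
    (hg.intervalIntegrable a b) fun x _ => inv_anti₀ (hpos x) (hM x)
  rwa [intervalIntegral.integral_const, smul_eq_mul, ← div_eq_mul_inv] at this

lemma integral_inv_le_sub_div {k a b : ℝ} (hf : Continuous f) (hk : 0 < k) (hkf : ∀ x, k ≤ f x)
    (hab : a ≤ b) : ∫ x in a..b, (f x)⁻¹ ≤ (b - a) / k := by
  have hg : Continuous fun x => (f x)⁻¹ := hf.inv₀ fun x => (hk.trans_le (hkf x)).ne'
  have := intervalIntegral.integral_mono_on (μ := MeasureTheory.volume) hab
    (hg.intervalIntegrable a b) intervalIntegrable_const fun x _ => inv_anti₀ hk (hkf x)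
  rwa [intervalIntegral.integral_const, smul_eq_mul, ← div_eq_mul_inv] at this

theorem exists_hasDerivAt_of_periodic {M P : ℝ} (hf : Continuous f) (hpos : ∀ x, 0 < f x)
    (hM : ∀ x, f x ≤ M) (hP : Periodic f P) :
    ∃ θ : ℝ → ℝ, θ 0 = 0 ∧ (∀ t, HasDerivAt θ (f (θ t)) t) ∧
      ∀ t, θ (t + ∫ x in 0..P, (f x)⁻¹) = θ t + P := by
  have hg : Continuous fun x => (f x)⁻¹ := hf.inv₀ fun x => (hpos x).ne'
  have hMpos : 0 < M := (hpos 0).trans_le (hM 0)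
  -- `θ` is the inverse of the travel time `G y = ∫₀ʸ dx / f x`.
  set G : ℝ → ℝ := fun y => ∫ x in 0..y, (f x)⁻¹
  have hG : ∀ y, HasDerivAt G (f y)⁻¹ y := fun y => (hg.integral_hasStrictDerivAt 0 y).hasDerivAt
  have hmono : StrictMono G := strictMono_of_hasDerivAt_pos hG fun y => inv_pos.2 (hpos y)
  have hgrow : ∀ x y, x ≤ y → (y - x) / M ≤ G y - G x := fun x y hxy => by
    rw [intervalIntegral.integral_interval_sub_left (hg.intervalIntegrable _ _)
      (hg.intervalIntegrable _ _)]
    exact sub_div_le_integral_inv hf hpos hM hxy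
  have hG0 : G 0 = 0 := intervalIntegral.integral_same
  have htop : Tendsto G atTop atTop :=
    tendsto_atTop_mono' _ ((eventually_ge_atTop 0).mono fun y hy => by
      simpa [hG0] using hgrow 0 y hy) (tendsto_id.atTop_div_const hMpos)
  have hbot : Tendsto G atBot atBot :=
    tendsto_atBot_mono' _ ((eventually_le_atBot 0).mono fun y hy => by
      linarith [hgrow y 0 hy, show (0 - y) / M = -(id y / M) by simp [neg_div]])
      (tendsto_id.atBot_div_const hMpos)
  have hsurj : Surjective G :=
    (continuous_iff_continuousAt.2 fun y => (hG y).continuousAt).surjective htop hbot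
  let e := hmono.orderIsoOfSurjective G hsurj
  have hadd : ∀ y, G (y + P) = G y + G P := fun y => by
    simpa using (hP.comp Inv.inv).intervalIntegral_add_eq_add 0 y fun _ _ =>
      hg.intervalIntegrable _ _
  refine ⟨e.symm, ?_, fun t => ?_, fun t => ?_⟩
  · rw [e.symm_apply_eq]; exact hG0.symm
  · simpa using HasDerivAt.of_local_left_inverse e.symm.continuous.continuousAt (hG (e.symm t))
      (inv_ne_zero (hpos _).ne') (Eventually.of_forall e.apply_symm_apply)
  · rw [e.symm_apply_eq]
    change t + G P = G (e.symm t + P)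
    rw [hadd]
    exact congrArg (· + G P) (e.apply_symm_apply t).symm

end AutonomousODE

namespace Sitnikov

variable {ι : Type*} [Fintype ι] (m s : ι → ℝ)

/-- The distance from the point at height `x` on the axis to a primary at distance `s` from it. -/
noncomputable def primaryDist (s x : ℝ) : ℝ := √(s ^ 2 + x ^ 2)

noncomputable def stiffness (x : ℝ) : ℝ := ∑ i, m i / primaryDist (s i) x ^ 3

noncomputable def potential (x : ℝ) : ℝ := ∑ i, m i / primaryDist (s i) x

section primaryDist

variable {s : ℝ}

lemma primaryDist_pos (hs : 0 < s) (x : ℝ) : 0 < primaryDist s x :=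
  sqrt_pos.2 (by positivity)

lemma primaryDist_sq (s x : ℝ) : primaryDist s x ^ 2 = s ^ 2 + x ^ 2 :=
  sq_sqrt (by positivity)

lemma le_primaryDist (s x : ℝ) : s ≤ primaryDist s x :=
  le_sqrt_of_sq_le (by nlinarith)

lemma abs_le_primaryDist (s x : ℝ) : |x| ≤ primaryDist s x := by
  rw [← sqrt_sq_eq_abs]; exact sqrt_le_sqrt (by nlinarith)

lemma primaryDist_zero (hs : 0 ≤ s) : primaryDist s 0 = s := by
  simp [primaryDist, sqrt_sq hs]

lemma primaryDist_le_primaryDist {x y : ℝ} (h : x ^ 2 ≤ y ^ 2) :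
    primaryDist s x ≤ primaryDist s y :=
  sqrt_le_sqrt (by linarith)

lemma primaryDist_lt_primaryDist (hs : 0 < s) {x y : ℝ} (h : x ^ 2 < y ^ 2) :
    primaryDist s x < primaryDist s y :=
  sqrt_lt_sqrt (by positivity) (by linarith)

lemma hasDerivAt_primaryDist (hs : 0 < s) (x : ℝ) :
    HasDerivAt (primaryDist s) (x / primaryDist s x) x := by
  convert ((hasDerivAt_pow 2 x).const_add (s ^ 2)).sqrt (by positivity) using 1
  · rfl
  · simp only [primaryDist]
    push_cast
    ring

lemma continuous_primaryDist : Continuous fun p : ℝ × ℝ => primaryDist p.1 p.2 := by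
  unfold primaryDist; fun_prop

lemma rpow_three_halves_eq (s x : ℝ) :
    (s ^ 2 + x ^ 2) ^ ((3 : ℝ) / 2) = primaryDist s x ^ 3 := by
  rw [primaryDist, sqrt_eq_rpow, ← rpow_natCast (_ ^ _) 3, ← rpow_mul (by positivity)]
  norm_num

end primaryDist

lemma sum_div_rpow_eq_stiffness_mul (x : ℝ) :
    ∑ i, m i * x / (s i ^ 2 + x ^ 2) ^ ((3 : ℝ) / 2) = stiffness m s x * x := by
  simp only [rpow_three_halves_eq, stiffness, Finset.sum_mul]
  exact Finset.sum_congr rfl fun i _ => by ring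

lemma sum_mul_rpow_eq_stiffness (x : ℝ) :
    ∑ i, m i * (s i ^ 2 + x ^ 2) ^ (-(3 / 2) : ℝ) = stiffness m s x := by
  refine Finset.sum_congr rfl fun i _ => ?_
  rw [rpow_neg (by positivity), rpow_three_halves_eq, div_eq_mul_inv]

variable {m s}

lemma stiffness_zero (hs : ∀ i, 0 < s i) : stiffness m s 0 = ∑ i, m i / s i ^ 3 := by
  simp [stiffness, primaryDist_zero (hs _).le]

lemma stiffness_lt_stiffness_zero [Nonempty ι] (hm : ∀ i, 0 < m i) (hs : ∀ i, 0 < s i) {x : ℝ}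
    (hx : x ≠ 0) : stiffness m s x < stiffness m s 0 := by
  refine Finset.sum_lt_sum_of_nonempty Finset.univ_nonempty fun i _ => ?_
  have h0 := primaryDist_pos (hs i) 0
  gcongr
  · exact hm i
  · exact primaryDist_lt_primaryDist (hs i) (by simpa using pow_pos (abs_pos.2 hx) 2)

lemma stiffness_pos [Nonempty ι] (hm : ∀ i, 0 < m i) (hs : ∀ i, 0 < s i) (x : ℝ) :
    0 < stiffness m s x :=
  Finset.sum_pos (fun i _ => div_pos (hm i) (pow_pos (primaryDist_pos (hs i) x) 3))
    Finset.univ_nonempty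

lemma continuous_stiffness (hs : ∀ i, 0 < s i) : Continuous (stiffness m s) := by
  refine continuous_finsetSum _ fun i _ => continuous_const.div
    ((continuous_primaryDist.comp (Continuous.prodMk_right (s i))).pow 3)
    fun x => (pow_pos (primaryDist_pos (hs i) x) 3).ne'

lemma tendsto_stiffness_atTop :
    Tendsto (stiffness m s) atTop (𝓝 0) := by
  rw [show (0 : ℝ) = ∑ i : ι, 0 by simp]
  refine tendsto_finsetSum _ fun i _ => tendsto_const_nhds.div_atTop ?_
  refine (tendsto_pow_atTop three_ne_zero).comp (tendsto_atTop_mono (fun x => ?_) tendsto_id)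
  exact (le_abs_self x).trans (abs_le_primaryDist (s i) x)

theorem exists_stiffness_eq_iff (hm : ∀ i, 0 < m i) (hs : ∀ i, 0 < s i) [Nonempty ι] {lam : ℝ}
    (hlam : 0 < lam) : (∃ c, 0 < c ∧ stiffness m s c = lam) ↔ lam < stiffness m s 0 := by
  refine ⟨fun ⟨c, hc, hcl⟩ => hcl ▸ stiffness_lt_stiffness_zero hm hs hc.ne', fun h => ?_⟩
  obtain ⟨C, hCl, hC⟩ := (((tendsto_stiffness_atTop (m := m) (s := s)).eventually
    (gt_mem_nhds hlam)).and (eventually_ge_atTop 0)).exists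
  obtain ⟨c, hc, hcl⟩ := intermediate_value_Ioc' hC (continuous_stiffness hs).continuousOn
    ⟨hCl.le, h⟩
  exact ⟨c, hc.1, hcl⟩

lemma stiffness_neg (x : ℝ) : stiffness m s (-x) = stiffness m s x := by
  simp [stiffness, primaryDist]

lemma hasDerivAt_potential (hs : ∀ i, 0 < s i) (x : ℝ) :
    HasDerivAt (potential m s) (-(stiffness m s x * x)) x := by
  unfold potential stiffness
  rw [Finset.sum_mul, ← Finset.sum_neg_distrib]
  refine HasDerivAt.fun_sum fun i _ => ?_
  have hd := primaryDist_pos (hs i) x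
  refine ((hasDerivAt_const x (m i)).div (hasDerivAt_primaryDist (hs i) x) hd.ne').congr_deriv ?_
  field_simp
  ring

lemma potential_le_potential (hm : ∀ i, 0 < m i) (hs : ∀ i, 0 < s i) {x y : ℝ}
    (h : y ^ 2 ≤ x ^ 2) : potential m s x ≤ potential m s y :=
  Finset.sum_le_sum fun i _ => div_le_div_of_nonneg_left (hm i).le (primaryDist_pos (hs i) y)
    (primaryDist_le_primaryDist h)

variable (m s) in
structure IsSolution (z v : ℝ → ℝ) : Prop where
  hasDerivAt : ∀ t, HasDerivAt z (v t) t
  hasDerivAt_vel : ∀ t, HasDerivAt v (-(stiffness m s (z t) * z t)) t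

namespace IsSolution

variable {z v : ℝ → ℝ}

lemma neg (h : IsSolution m s z v) : IsSolution m s (fun t => -z t) (fun t => -v t) where
  hasDerivAt t := (h.hasDerivAt t).neg
  hasDerivAt_vel t := (h.hasDerivAt_vel t).neg.congr_deriv (by rw [stiffness_neg]; ring)

lemma deriv_eq (h : IsSolution m s z v) : deriv z = v :=
  funext fun t => (h.hasDerivAt t).deriv

lemma of_deriv (hz : Differentiable ℝ z) (hz' : Differentiable ℝ (deriv z))
    (hode : ∀ t, deriv (deriv z) t = -(stiffness m s (z t) * z t)) :
    IsSolution m s z (deriv z) where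
  hasDerivAt t := (hz t).hasDerivAt
  hasDerivAt_vel t := hode t ▸ (hz' t).hasDerivAt

lemma energy_eq (h : IsSolution m s z v) (hs : ∀ i, 0 < s i) (t t' : ℝ) :
    v t ^ 2 / 2 - potential m s (z t) = v t' ^ 2 / 2 - potential m s (z t') := by
  have hE : ∀ t, HasDerivAt (fun t => v t ^ 2 / 2 - potential m s (z t)) 0 t := fun t =>
    ((((h.hasDerivAt_vel t).pow 2).div_const 2).sub
      ((hasDerivAt_potential hs (z t)).comp t (h.hasDerivAt t))).congr_deriv (by ring)
  exact is_const_of_deriv_eq_zero (fun t => (hE t).differentiableAt) (fun t => (hE t).deriv) t t'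

lemma exists_pos (h : IsSolution m s z v) (hm : ∀ i, 0 < m i) (hs : ∀ i, 0 < s i) {T : ℝ}
    (hper : Periodic z T) (hT : T ≠ 0) (hnc : ∃ t₁ t₂, z t₁ ≠ z t₂) : ∃ t, 0 < z t := by
  by_contra! hnp
  have hcont : Continuous z := continuous_iff_continuousAt.2 fun t => (h.hasDerivAt t).continuousAt
  obtain ⟨-, ⟨t₀, rfl⟩, hmax⟩ := (hper.compact_of_continuous hT hcont).exists_isGreatest
    (range_nonempty z)
  have hmax : ∀ t, z t ≤ z t₀ := fun t => hmax ⟨t, rfl⟩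
  -- At the maximum the velocity vanishes, so energy conservation forbids any motion
  -- towards the plane, where the potential is larger.
  have hv₀ : v t₀ = 0 := IsLocalMax.hasDerivAt_eq_zero (Eventually.of_forall hmax) (h.hasDerivAt t₀)
  have hv : ∀ t, v t = 0 := fun t => by
    have hE := h.energy_eq hs t t₀
    have hV := potential_le_potential hm hs (show z t₀ ^ 2 ≤ z t ^ 2 by nlinarith [hmax t, hnp t₀])
    rw [hv₀] at hE
    nlinarith [sq_nonneg (v t)]
  obtain ⟨t₁, t₂, h₁₂⟩ := hnc
  exact h₁₂ (is_const_of_deriv_eq_zero (fun t => (h.hasDerivAt t).differentiableAt)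
    (fun t => (h.hasDerivAt t).deriv.trans (hv t)) t₁ t₂)

theorem two_pi_lt_sqrt_stiffness_zero_mul [Nonempty ι] (h : IsSolution m s z v)
    (hm : ∀ i, 0 < m i) (hs : ∀ i, 0 < s i) {T : ℝ} (hper : Periodic z T) (hT : 0 < T)
    (hnc : ∃ t₁ t₂, z t₁ ≠ z t₂) : 2 * π < √(stiffness m s 0) * T := by
  obtain ⟨t₁, t₂, h₁₂⟩ := hnc
  obtain ⟨tn, htn⟩ := h.neg.exists_pos hm hs (hper.comp Neg.neg) hT.ne'
    ⟨t₁, t₂, fun h => h₁₂ (neg_inj.1 h)⟩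
  exact two_pi_lt_sqrt_mul_of_periodic h.hasDerivAt h.hasDerivAt_vel
    (fun t ht => stiffness_lt_stiffness_zero hm hs ht) hper hT
    (h.exists_pos hm hs hper hT.ne' ⟨t₁, t₂, h₁₂⟩) ⟨tn, neg_pos.1 htn⟩

theorem lt_stiffness_zero [Nonempty ι] (h : IsSolution m s z v) (hm : ∀ i, 0 < m i)
    (hs : ∀ i, 0 < s i) {lam : ℝ} (hlam : 0 < lam) (hper : Periodic z (2 * π / √lam))
    (hnc : ∃ t₁ t₂, z t₁ ≠ z t₂) :
    lam < stiffness m s 0 := by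
  have := h.two_pi_lt_sqrt_stiffness_zero_mul hm hs hper (by positivity) hnc
  rw [mul_div_assoc', lt_div_iff₀ (sqrt_pos.2 hlam), mul_comm] at this
  exact (sqrt_lt_sqrt_iff hlam.le).1 (lt_of_mul_lt_mul_right this two_pi_pos.le)

end IsSolution

variable (m s) in
/-- The quotient `2 (potential x - potential a) / (a² - x²)` (see `energyQuot_mul_sub`), in a form
that stays regular at `x = ±a`. Along `x = a sin θ` the energy relation
`z'² = 2 (potential z - potential a)` becomes `θ'² = energyQuot a (a sin θ)`. -/
noncomputable def energyQuot (a x : ℝ) : ℝ :=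
  ∑ i, m i * (2 / (primaryDist (s i) x * primaryDist (s i) a *
    (primaryDist (s i) x + primaryDist (s i) a)))

variable (m s) in
noncomputable def phaseSpeed (a θ : ℝ) : ℝ := √(energyQuot m s a (a * sin θ))

variable (m s) in
noncomputable def phasePeriod (a : ℝ) : ℝ := ∫ θ in 0..2 * π, (phaseSpeed m s a θ)⁻¹

section energyQuot

variable {a x : ℝ}

lemma energyQuot_mul_sub (hs : ∀ i, 0 < s i) (a x : ℝ) :
    energyQuot m s a x * (a ^ 2 - x ^ 2) = 2 * (potential m s x - potential m s a) := by
  rw [energyQuot, potential, potential, Finset.sum_mul, ← Finset.sum_sub_distrib, Finset.mul_sum]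
  refine Finset.sum_congr rfl fun i _ => ?_
  have hA := primaryDist_pos (hs i) x
  have hB := primaryDist_pos (hs i) a
  have hBA : a ^ 2 - x ^ 2 = primaryDist (s i) a ^ 2 - primaryDist (s i) x ^ 2 := by
    simp only [primaryDist_sq]; ring
  rw [hBA]
  field_simp
  ring

lemma differentiable_energyQuot (hs : ∀ i, 0 < s i) (a : ℝ) :
    Differentiable ℝ (energyQuot m s a) := by
  intro x
  have hd : ∀ i, DifferentiableAt ℝ (primaryDist (s i)) x := fun i =>
    (hasDerivAt_primaryDist (hs i) x).differentiableAt
  unfold energyQuot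
  refine DifferentiableAt.fun_sum fun i _ => (differentiableAt_const _).mul
    ((differentiableAt_const _).div (((hd i).mul_const _).mul ((hd i).add_const _)) ?_)
  have := primaryDist_pos (hs i) x
  have := primaryDist_pos (hs i) a
  positivity

lemma energyQuot_identity (hs : ∀ i, 0 < s i) (a x : ℝ) :
    -(x * energyQuot m s a x) + (a ^ 2 - x ^ 2) * deriv (energyQuot m s a) x / 2 =
      -(stiffness m s x * x) := by
  have hL := ((differentiable_energyQuot (m := m) hs a x).hasDerivAt).fun_mul
    ((hasDerivAt_pow 2 x).const_sub (a ^ 2))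
  have hR := ((hasDerivAt_potential (m := m) hs x).sub_const (potential m s a)).const_mul 2
  rw [show (fun y => energyQuot m s a y * (a ^ 2 - y ^ 2)) =
    fun y => 2 * (potential m s y - potential m s a) from funext (energyQuot_mul_sub hs a)] at hL
  have := hL.unique hR
  push_cast at this
  linarith

lemma phaseSpeed_periodic (a : ℝ) : Periodic (phaseSpeed m s a) (2 * π) := fun θ => by
  simp [phaseSpeed, sin_add_two_pi]

lemma stiffness_le_energyQuot (hm : ∀ i, 0 < m i) (hs : ∀ i, 0 < s i) (h : x ^ 2 ≤ a ^ 2) :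
    stiffness m s a ≤ energyQuot m s a x := by
  refine Finset.sum_le_sum fun i _ => ?_
  have hA := primaryDist_pos (hs i) x
  have hB := primaryDist_pos (hs i) a
  have hAB := primaryDist_le_primaryDist (s := s i) h
  have := hm i
  calc m i / primaryDist (s i) a ^ 3 = m i * (2 / (primaryDist (s i) a * primaryDist (s i) a *
        (primaryDist (s i) a + primaryDist (s i) a))) := by field_simp; ring
    _ ≤ _ := by gcongr

lemma energyQuot_le (hm : ∀ i, 0 < m i) (hs : ∀ i, 0 < s i) (ha : 0 < a) :
    energyQuot m s a x ≤ 2 * (∑ i, m i / s i) / a ^ 2 := by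
  rw [Finset.mul_sum, Finset.sum_div]
  refine Finset.sum_le_sum fun i _ => ?_
  have hA := le_primaryDist (s i) x
  have hB := (le_abs_self a).trans (abs_le_primaryDist (s i) a)
  have hAB : s i * a * a ≤ primaryDist (s i) x * primaryDist (s i) a *
      (primaryDist (s i) x + primaryDist (s i) a) := by
    have := hs i
    have := primaryDist_pos (hs i) x
    have := primaryDist_pos (hs i) a
    gcongr
    linarith
  have := hs i
  calc m i * (2 / _) ≤ m i * (2 / (s i * a * a)) := by gcongr; exact hm i |>.le
    _ = 2 * (m i / s i) / a ^ 2 := by field_simp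

lemma continuous_phaseSpeed_uncurry (hs : ∀ i, 0 < s i) :
    Continuous (uncurry (phaseSpeed m s)) := by
  change Continuous fun p : ℝ × ℝ => √(energyQuot m s p.1 (p.1 * sin p.2))
  unfold energyQuot
  refine continuous_sqrt.comp (continuous_finsetSum _ fun i _ => continuous_const.mul
    (continuous_const.div ?_ fun p => ?_))
  · have hA : Continuous fun p : ℝ × ℝ => primaryDist (s i) (p.1 * sin p.2) := by
      unfold primaryDist; fun_prop
    have hB : Continuous fun p : ℝ × ℝ => primaryDist (s i) p.1 := by
      unfold primaryDist; fun_prop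
    exact (hA.mul hB).mul (hA.add hB)
  · have := primaryDist_pos (hs i) (p.1 * sin p.2)
    have := primaryDist_pos (hs i) p.1
    positivity

lemma continuous_phaseSpeed (hs : ∀ i, 0 < s i) (a : ℝ) : Continuous (phaseSpeed m s a) :=
  (continuous_phaseSpeed_uncurry hs).uncurry_left a

lemma sqrt_stiffness_le_phaseSpeed (hm : ∀ i, 0 < m i) (hs : ∀ i, 0 < s i) (a θ : ℝ) :
    √(stiffness m s a) ≤ phaseSpeed m s a θ :=
  sqrt_le_sqrt (stiffness_le_energyQuot hm hs (by nlinarith [sin_sq_le_one θ, sq_nonneg a]))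

lemma phaseSpeed_le (hm : ∀ i, 0 < m i) (hs : ∀ i, 0 < s i) (ha : 0 < a) (θ : ℝ) :
    phaseSpeed m s a θ ≤ √(2 * ∑ i, m i / s i) / a := by
  calc phaseSpeed m s a θ ≤ √(2 * (∑ i, m i / s i) / a ^ 2) :=
        sqrt_le_sqrt (energyQuot_le hm hs ha)
    _ = √(2 * ∑ i, m i / s i) / a := by rw [sqrt_div' _ (sq_nonneg a), sqrt_sq ha.le]

end energyQuot

variable [Nonempty ι] {a : ℝ}

lemma energyQuot_pos (hm : ∀ i, 0 < m i) (hs : ∀ i, 0 < s i) (a x : ℝ) :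
    0 < energyQuot m s a x :=
  Finset.sum_pos (fun i _ => by
    have := hm i
    have := primaryDist_pos (hs i) x
    have := primaryDist_pos (hs i) a
    positivity) Finset.univ_nonempty

lemma phaseSpeed_pos (hm : ∀ i, 0 < m i) (hs : ∀ i, 0 < s i) (a θ : ℝ) :
    0 < phaseSpeed m s a θ :=
  sqrt_pos.2 (energyQuot_pos hm hs a _)

lemma hasDerivAt_phaseSpeed (hm : ∀ i, 0 < m i) (hs : ∀ i, 0 < s i) (a θ : ℝ) :
    HasDerivAt (phaseSpeed m s a)
      (deriv (energyQuot m s a) (a * sin θ) * (a * cos θ) / (2 * phaseSpeed m s a θ)) θ :=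
  (((differentiable_energyQuot hs a _).hasDerivAt).comp θ
    ((hasDerivAt_sin θ).const_mul a)).sqrt (energyQuot_pos hm hs a _).ne'

lemma phaseSpeed_mul_accel_eq (hm : ∀ i, 0 < m i) (hs : ∀ i, 0 < s i) (ψ : ℝ) :
    (a * -sin ψ * phaseSpeed m s a ψ + a * cos ψ *
      (deriv (energyQuot m s a) (a * sin ψ) * (a * cos ψ) / (2 * phaseSpeed m s a ψ))) *
        phaseSpeed m s a ψ = -(stiffness m s (a * sin ψ) * (a * sin ψ)) := by
  have hΦ := (phaseSpeed_pos hm hs a ψ).ne'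
  have hΦ2 : phaseSpeed m s a ψ ^ 2 = energyQuot m s a (a * sin ψ) :=
    sq_sqrt (energyQuot_pos hm hs a _).le
  rw [← energyQuot_identity hs a (a * sin ψ), ← hΦ2]
  field_simp
  linear_combination (a ^ 2 * deriv (energyQuot m s a) (a * sin ψ)) * sin_sq_add_cos_sq ψ

theorem isSolution_of_hasDerivAt_phase (hm : ∀ i, 0 < m i) (hs : ∀ i, 0 < s i) {θ : ℝ → ℝ}
    (hθ : ∀ t, HasDerivAt θ (phaseSpeed m s a (θ t)) t) :
    IsSolution m s (fun t => a * sin (θ t)) fun t => a * cos (θ t) * phaseSpeed m s a (θ t) where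
  hasDerivAt t := (((hasDerivAt_sin _).comp t (hθ t)).const_mul a).congr_deriv (by ring)
  hasDerivAt_vel t := by
    rw [← phaseSpeed_mul_accel_eq hm hs]
    exact ((((hasDerivAt_cos _).const_mul a).fun_mul (hasDerivAt_phaseSpeed hm hs a _)).comp t
      (hθ t))

lemma continuous_phasePeriod (hm : ∀ i, 0 < m i) (hs : ∀ i, 0 < s i) :
    Continuous (phasePeriod m s) :=
  intervalIntegral.continuous_parametric_intervalIntegral_of_continuous'
    ((continuous_phaseSpeed_uncurry hs).inv₀ fun p => (phaseSpeed_pos hm hs p.1 p.2).ne') 0 (2 * π)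

lemma phasePeriod_le (hm : ∀ i, 0 < m i) (hs : ∀ i, 0 < s i) (a : ℝ) :
    phasePeriod m s a ≤ 2 * π / √(stiffness m s a) := by
  simpa only [sub_zero, phasePeriod] using integral_inv_le_sub_div (continuous_phaseSpeed hs a)
    (sqrt_pos.2 (stiffness_pos hm hs a)) (sqrt_stiffness_le_phaseSpeed hm hs a) two_pi_pos.le

lemma le_phasePeriod (hm : ∀ i, 0 < m i) (hs : ∀ i, 0 < s i) (ha : 0 < a) :
    2 * π / (√(2 * ∑ i, m i / s i) / a) ≤ phasePeriod m s a := by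
  simpa only [sub_zero, phasePeriod] using sub_div_le_integral_inv (continuous_phaseSpeed hs a)
    (phaseSpeed_pos hm hs a) (phaseSpeed_le hm hs ha) two_pi_pos.le

theorem exists_isSolution_periodic (hm : ∀ i, 0 < m i) (hs : ∀ i, 0 < s i) {c T : ℝ}
    (hc : 0 < c) (hT : 2 * π / √(stiffness m s c) ≤ T) :
    ∃ z v, IsSolution m s z v ∧ Periodic z T ∧ ∃ t₁ t₂, z t₁ ≠ z t₂ := by
  set K := √(2 * ∑ i, m i / s i)
  have hK : 0 < K := sqrt_pos.2 (mul_pos two_pos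
    (Finset.sum_pos (fun i _ => div_pos (hm i) (hs i)) Finset.univ_nonempty))
  set a₁ := max c (T * K / (2 * π))
  have hTa₁ : T ≤ phasePeriod m s a₁ := by
    refine le_trans ?_ (le_phasePeriod hm hs (hc.trans_le (le_max_left _ _)))
    rw [div_div_eq_mul_div, le_div_iff₀ hK, ← div_le_iff₀' two_pi_pos]
    exact le_max_right _ _
  obtain ⟨a, ⟨hca, -⟩, haT⟩ := intermediate_value_Icc (le_max_left c _)
    (continuous_phasePeriod hm hs).continuousOn ⟨(phasePeriod_le hm hs c).trans hT, hTa₁⟩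
  have ha : 0 < a := hc.trans_le hca
  obtain ⟨θ, hθ0, hθ, hθper⟩ := exists_hasDerivAt_of_periodic (continuous_phaseSpeed hs a)
    (phaseSpeed_pos hm hs a) (phaseSpeed_le hm hs ha) (phaseSpeed_periodic a)
  change ∀ t, θ (t + phasePeriod m s a) = θ t + 2 * π at hθper
  rw [haT] at hθper
  refine ⟨_, _, isSolution_of_hasDerivAt_phase hm hs hθ,
    fun t => by simp only [hθper, sin_add_two_pi], ?_⟩
  have hθT : θ T = 2 * π := by simpa [hθ0] using hθper 0
  obtain ⟨t₁, -, ht₁⟩ := intermediate_value_uIcc (a := 0) (b := T)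
    (HasDerivAt.continuousOn fun t _ => hθ t)
    (show π / 2 ∈ uIcc (θ 0) (θ T) by
      rw [hθ0, hθT]; exact mem_uIcc_of_le (by positivity) (by linarith [pi_pos]))
  exact ⟨t₁, 0, by simp [ht₁, hθ0, ha.ne']⟩

end Sitnikov

open Sitnikov in
/-- For primaries in a rigid motion with angular velocity `√λ`, the
following are equivalent: (i) the Sitnikov equation has a nonconstant
solution of period `2π/√λ` (a synchronous solution); (ii) there is a height
`c > 0` with `∑ m_i (s_i² + c²)^{-3/2} = λ` (the pyramidal central
configuration condition); (iii) `λ < ∑ m_i/s_i³`. -/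
theorem synchronous_iff_pyramidal_iff_lambda_lt
    (n : ℕ) (hn : 1 ≤ n) (m s : Fin n → ℝ)
    (hm : ∀ i, 0 < m i) (hs : ∀ i, 0 < s i)
    (lam : ℝ) (hlam : 0 < lam) :
    ((∃ z : ℝ → ℝ, Differentiable ℝ z ∧ Differentiable ℝ (deriv z) ∧
        (∀ t : ℝ, deriv (deriv z) t =
          -∑ i, m i * z t / (s i ^ 2 + z t ^ 2) ^ ((3 : ℝ) / 2)) ∧
        (∃ t₁ t₂ : ℝ, z t₁ ≠ z t₂) ∧
        (∀ t : ℝ, z (t + 2 * Real.pi / Real.sqrt lam) = z t)) ↔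
      (∃ c : ℝ, 0 < c ∧
        ∑ i, m i * (s i ^ 2 + c ^ 2) ^ (-(3 / 2) : ℝ) = lam)) ∧
    ((∃ c : ℝ, 0 < c ∧
        ∑ i, m i * (s i ^ 2 + c ^ 2) ^ (-(3 / 2) : ℝ) = lam) ↔
      lam < ∑ i, m i / s i ^ 3) := by
  have : Nonempty (Fin n) := ⟨⟨0, hn⟩⟩
  simp only [sum_div_rpow_eq_stiffness_mul, sum_mul_rpow_eq_stiffness, ← stiffness_zero hs]
  have hpyramidal := exists_stiffness_eq_iff hm hs hlam
  refine ⟨⟨fun ⟨z, hz, hz', hode, hnc, hper⟩ => hpyramidal.2 ?_, fun ⟨c, hc, hcl⟩ => ?_⟩,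
    hpyramidal⟩
  · exact (IsSolution.of_deriv hz hz' hode).lt_stiffness_zero hm hs hlam hper hnc
  · obtain ⟨z, v, hsol, hper, hnc⟩ := exists_isSolution_periodic hm hs hc (T := 2 * π / √lam)
      (by rw [hcl])
    refine ⟨z, fun t => (hsol.hasDerivAt t).differentiableAt, ?_, fun t => ?_, hnc, hper⟩
    · exact hsol.deriv_eq ▸ fun t => (hsol.hasDerivAt_vel t).differentiableAt
    · rw [hsol.deriv_eq, (hsol.hasDerivAt_vel t).deriv]
end

section
/- Let n ≥ 2 be an integer. Then the inequality (1/n) ∑_{j=1}^{n−1} 1/sin(jπ/n) < 4 holds if and only if n ≤ 472. -/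
/-!
Write `S n = ∑_{j=1}^{n-1} 1 / sin (jπ/n)`. Since `jπ/n` is the convex combination of
`jπ/(n+1)` and `(j+1)π/(n+1)` with weights `(n-j)/n` and `j/n`, convexity of `1 / sin` on `(0, π)`
gives `n S(n) ≤ (n-1) S(n+1)`, so `S(n)/n` is nondecreasing and it suffices to show
`S(472)/472 < 4 ≤ S(473)/473`. The margins are only about `4·10⁻⁴` and `10⁻³`: each sum is folded
in half with `sin (π - t) = sin t`, and on `(0, π/2]` the cosecant is squeezed between truncations
of its Laurent series, which follow from the alternating Taylor bounds for `sin`.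
-/

open Real Finset
open scoped Nat

noncomputable section

theorem hasDerivAt_pow_succ_div_factorial (m : ℕ) (x : ℝ) :
    HasDerivAt (fun y : ℝ => y ^ (m + 1) / (m + 1)!) (x ^ m / m !) x := by
  refine ((hasDerivAt_pow (m + 1) x).div_const ((m + 1)! : ℝ)).congr_deriv ?_
  rw [Nat.factorial_succ]
  push_cast
  field_simp

def sinTaylor (k : ℕ) (x : ℝ) : ℝ := ∑ i ∈ range k, (-1) ^ i * (x ^ (2 * i + 1) / (2 * i + 1)!)

def cosTaylor (k : ℕ) (x : ℝ) : ℝ := ∑ i ∈ range k, (-1) ^ i * (x ^ (2 * i) / (2 * i)!)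

theorem hasDerivAt_sinTaylor (k : ℕ) (x : ℝ) : HasDerivAt (sinTaylor k) (cosTaylor k x) x := by
  unfold sinTaylor cosTaylor
  convert HasDerivAt.fun_sum fun i _ =>
    (hasDerivAt_pow_succ_div_factorial (2 * i) x).const_mul ((-1 : ℝ) ^ i) using 1

theorem hasDerivAt_cosTaylor_succ (k : ℕ) (x : ℝ) :
    HasDerivAt (cosTaylor (k + 1)) (-sinTaylor k x) x := by
  have h : cosTaylor (k + 1) = fun y =>
      ∑ i ∈ range k, (-1 : ℝ) ^ (i + 1) * (y ^ (2 * i + 1 + 1) / (2 * i + 1 + 1)!) + 1 := by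
    ext y
    simp [cosTaylor, sum_range_succ', mul_add]
  rw [h, sinTaylor, ← sum_neg_distrib]
  refine ((HasDerivAt.fun_sum fun i _ => (hasDerivAt_pow_succ_div_factorial (2 * i + 1) x).const_mul
    ((-1 : ℝ) ^ (i + 1))).add_const 1).congr_deriv (sum_congr rfl fun i _ => by ring)

theorem cosTaylor_succ_zero (k : ℕ) : cosTaylor (k + 1) 0 = 1 := by
  simp [cosTaylor, sum_range_succ']

theorem nonneg_of_hasDerivAt_nonneg {f f' : ℝ → ℝ} (hf : ∀ x, HasDerivAt f (f' x) x)
    (hf' : ∀ x, 0 ≤ x → 0 ≤ f' x) (h0 : f 0 = 0) {t : ℝ} (ht : 0 ≤ t) : 0 ≤ f t := by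
  have hmono : MonotoneOn f (Set.Ici 0) :=
    monotoneOn_of_hasDerivWithinAt_nonneg (convex_Ici 0)
      (fun x _ => (hf x).continuousAt.continuousWithinAt)
      (fun x _ => (hf x).hasDerivWithinAt)
      (fun x hx => hf' x (interior_subset hx))
  simpa [h0] using hmono Set.self_mem_Ici ht ht

theorem sinTaylor_alternating_of_cosTaylor {k : ℕ}
    (hcos : ∀ t, 0 ≤ t → 0 ≤ (-1) ^ k * (cosTaylor (k + 1) t - cos t)) {t : ℝ} (ht : 0 ≤ t) :
    0 ≤ (-1) ^ k * (sinTaylor (k + 1) t - sin t) :=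
  nonneg_of_hasDerivAt_nonneg
    (fun x => ((hasDerivAt_sinTaylor (k + 1) x).sub (hasDerivAt_sin x)).const_mul _) hcos
    (by simp [sinTaylor]) ht

theorem cosTaylor_alternating (k : ℕ) {t : ℝ} (ht : 0 ≤ t) :
    0 ≤ (-1) ^ k * (cosTaylor (k + 1) t - cos t) := by
  induction k generalizing t with
  | zero => simp [cosTaylor, cos_le_one]
  | succ k ih =>
    refine nonneg_of_hasDerivAt_nonneg
      (fun x => ((hasDerivAt_cosTaylor_succ (k + 1) x).sub (hasDerivAt_cos x)).const_mul _)
      (fun x hx => ?_) (by simp [cosTaylor_succ_zero]) ht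
    convert sinTaylor_alternating_of_cosTaylor (fun t ht => ih ht) hx using 1
    ring

theorem sinTaylor_alternating (k : ℕ) {t : ℝ} (ht : 0 ≤ t) :
    0 ≤ (-1) ^ k * (sinTaylor (k + 1) t - sin t) :=
  sinTaylor_alternating_of_cosTaylor (fun _ => cosTaylor_alternating k) ht

theorem sin_le_sinTaylor_five {t : ℝ} (ht : 0 ≤ t) :
    sin t ≤ t - t ^ 3 / 6 + t ^ 5 / 120 - t ^ 7 / 5040 + t ^ 9 / 362880 := by
  have h := sinTaylor_alternating 4 ht
  norm_num [sinTaylor, sum_range_succ, Nat.factorial] at h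
  linarith

theorem sinTaylor_six_le_sin {t : ℝ} (ht : 0 ≤ t) :
    t - t ^ 3 / 6 + t ^ 5 / 120 - t ^ 7 / 5040 + t ^ 9 / 362880 - t ^ 11 / 39916800 ≤ sin t := by
  have h := sinTaylor_alternating 5 ht
  norm_num [sinTaylor, sum_range_succ, Nat.factorial] at h
  linarith

/-- The Laurent expansion of `1 / sin t` at `0`, truncated after the `t ^ 7` term. -/
def cscLaurent (t : ℝ) : ℝ :=
  1 / t + t / 6 + 7 * t ^ 3 / 360 + 31 * t ^ 5 / 15120 + 127 * t ^ 7 / 604800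

theorem sq_le_of_le_pi_div_two {t : ℝ} (h0 : 0 < t) (h1 : t ≤ π / 2) : t ^ 2 ≤ 2.4675 := by
  nlinarith [pi_lt_d4]

theorem cscLaurent_le_one_div_sin {t : ℝ} (h0 : 0 < t) (h1 : t ≤ π / 2) :
    cscLaurent t ≤ 1 / sin t := by
  have hsin : 0 < sin t := sin_pos_of_pos_of_lt_pi h0 (by linarith [pi_pos])
  have hu := sq_le_of_le_pi_div_two h0 h1
  have hL : 0 < cscLaurent t := by unfold cscLaurent; positivity
  rw [le_div_iff₀ hsin]
  have hg : -(29 / 1360800) + 3193 / 2286144000 * t ^ 2 - 247 / 6858432000 * (t ^ 2) ^ 2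
      + 127 / 219469824000 * (t ^ 2) ^ 3 ≤ (0 : ℝ) := by
    nlinarith [pow_le_pow_left₀ (sq_nonneg t) hu 3]
  calc cscLaurent t * sin t
      ≤ cscLaurent t * (t - t ^ 3 / 6 + t ^ 5 / 120 - t ^ 7 / 5040 + t ^ 9 / 362880) :=
        mul_le_mul_of_nonneg_left (sin_le_sinTaylor_five h0.le) hL.le
    _ = 1 + t ^ 10 * (-(29 / 1360800) + 3193 / 2286144000 * t ^ 2
          - 247 / 6858432000 * (t ^ 2) ^ 2 + 127 / 219469824000 * (t ^ 2) ^ 3) := by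
        unfold cscLaurent; field_simp; ring
    _ ≤ 1 := by linarith [mul_nonpos_of_nonneg_of_nonpos (pow_nonneg h0.le 10) hg]

theorem one_div_sin_le_cscLaurent_add {t : ℝ} (h0 : 0 < t) (h1 : t ≤ π / 2) :
    1 / sin t ≤ cscLaurent t + t ^ 9 / 20000 := by
  have hsin : 0 < sin t := sin_pos_of_pos_of_lt_pi h0 (by linarith [pi_pos])
  have hu := sq_le_of_le_pi_div_two h0 h1
  have hU : 0 < cscLaurent t + t ^ 9 / 20000 := by unfold cscLaurent; positivity
  rw [div_le_iff₀ hsin]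
  have hg : (0 : ℝ) ≤ 12259 / 427680000 - 436363 / 62868960000 * t ^ 2
      + 2868073 / 7544275200000 * (t ^ 2) ^ 2 - 566927 / 60354201600000 * (t ^ 2) ^ 3
      + 15997 / 120708403200000 * (t ^ 2) ^ 4 - 1 / 798336000000 * (t ^ 2) ^ 5 := by
    nlinarith [pow_le_pow_left₀ (sq_nonneg t) hu 3, pow_le_pow_left₀ (sq_nonneg t) hu 5,
      pow_nonneg (sq_nonneg t) 2, pow_nonneg (sq_nonneg t) 4]
  calc (1 : ℝ)
      ≤ 1 + t ^ 10 * (12259 / 427680000 - 436363 / 62868960000 * t ^ 2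
          + 2868073 / 7544275200000 * (t ^ 2) ^ 2 - 566927 / 60354201600000 * (t ^ 2) ^ 3
          + 15997 / 120708403200000 * (t ^ 2) ^ 4 - 1 / 798336000000 * (t ^ 2) ^ 5) := by
        linarith [mul_nonneg (pow_nonneg h0.le 10) hg]
    _ = (cscLaurent t + t ^ 9 / 20000) * (t - t ^ 3 / 6 + t ^ 5 / 120 - t ^ 7 / 5040
          + t ^ 9 / 362880 - t ^ 11 / 39916800) := by
        unfold cscLaurent; field_simp; ring
    _ ≤ (cscLaurent t + t ^ 9 / 20000) * sin t :=
        mul_le_mul_of_nonneg_left (sinTaylor_six_le_sin h0.le) hU.le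

def cscSum (n : ℕ) : ℝ := ∑ j ∈ Ico 1 n, 1 / sin (j * π / n)

def cscMean (n : ℕ) : ℝ := 1 / n * cscSum n

theorem mul_pi_div_mem_Ioo {j n : ℕ} (hj : j ∈ Ico 1 n) : (j : ℝ) * π / n ∈ Set.Ioo 0 π := by
  rw [mem_Ico] at hj
  have hj1 : (1 : ℝ) ≤ j := by exact_mod_cast hj.1
  have hjn : (j : ℝ) < n := by exact_mod_cast hj.2
  have hn : (0 : ℝ) < n := by linarith
  refine ⟨by positivity, ?_⟩
  rw [div_lt_iff₀ hn]
  nlinarith [pi_pos]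

theorem cscSum_nonneg (n : ℕ) : 0 ≤ cscSum n :=
  sum_nonneg fun _ hj => one_div_nonneg.2
    (sin_pos_of_pos_of_lt_pi (mul_pi_div_mem_Ioo hj).1 (mul_pi_div_mem_Ioo hj).2).le

theorem ConcaveOn.convexOn_one_div {E : Type*} [AddCommMonoid E] [Module ℝ E] {s : Set E}
    {f : E → ℝ} (hf : ConcaveOn ℝ s f) (hpos : ∀ x ∈ s, 0 < f x) :
    ConvexOn ℝ s fun x => 1 / f x := by
  refine ⟨hf.1, fun x hx y hy a b ha hb hab => ?_⟩
  have hmix : 0 < a • f x + b • f y := convex_Ioi (0 : ℝ) (hpos x hx) (hpos y hy) ha hb hab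
  calc 1 / f (a • x + b • y) ≤ 1 / (a • f x + b • f y) :=
        one_div_le_one_div_of_le hmix (hf.2 hx hy ha hb hab)
    _ ≤ a • (1 / f x) + b • (1 / f y) := by
        simpa using (convexOn_zpow (-1)).2 (hpos x hx) (hpos y hy) ha hb hab

theorem convexOn_one_div_sin : ConvexOn ℝ (Set.Ioo 0 π) fun x => 1 / sin x :=
  (strictConcaveOn_sin_Icc.concaveOn.subset Set.Ioo_subset_Icc_self
    (convex_Ioo 0 π)).convexOn_one_div
    fun _ hx => sin_pos_of_pos_of_lt_pi hx.1 hx.2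

theorem natCast_mul_one_div_sin_le {n j : ℕ} (hj : j ∈ Ico 1 n) :
    n * (1 / sin (j * π / n)) ≤
      (n - j) * (1 / sin (j * π / (n + 1 : ℕ)))
        + j * (1 / sin ((j + 1 : ℕ) * π / (n + 1 : ℕ))) := by
  have hj' := mem_Ico.1 hj
  have hn : (0 : ℝ) < n := Nat.cast_pos.2 (by omega)
  have hjn : (j : ℝ) ≤ n := by exact_mod_cast hj'.2.le
  have hx := mul_pi_div_mem_Ioo (n := n + 1) (mem_Ico.2 ⟨hj'.1, by omega⟩)
  have hy := mul_pi_div_mem_Ioo (n := n + 1) (j := j + 1) (mem_Ico.2 ⟨by omega, by omega⟩)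
  have ha : 0 ≤ ((n : ℝ) - j) / n := div_nonneg (by linarith) hn.le
  have hb : 0 ≤ (j : ℝ) / n := by positivity
  have h := convexOn_one_div_sin.2 hx hy ha hb (by field_simp; ring)
  have hcomb : ((n : ℝ) - j) / n * (j * π / (n + 1 : ℕ))
      + j / n * ((j + 1 : ℕ) * π / (n + 1 : ℕ)) = j * π / n := by
    push_cast
    field_simp
    ring
  simp only [smul_eq_mul, hcomb] at h
  calc n * (1 / sin (j * π / n))
      ≤ n * ((n - j) / n * (1 / sin (j * π / (n + 1 : ℕ)))
          + j / n * (1 / sin ((j + 1 : ℕ) * π / (n + 1 : ℕ)))) := by gcongr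
    _ = _ := by field_simp

theorem sum_Ico_sub_mul_add_mul_succ (c : ℕ → ℝ) {n : ℕ} (hn : 1 ≤ n) :
    ∑ j ∈ Ico 1 n, (((n : ℝ) - j) * c j + j * c (j + 1)) =
      (n - 1) * ∑ k ∈ Ico 1 (n + 1), c k := by
  have hfirst : ∑ j ∈ Ico 1 n, ((n : ℝ) - j) * c j = ∑ j ∈ Ico 1 (n + 1), ((n : ℝ) - j) * c j := by
    rw [sum_Ico_succ_top hn]
    simp
  have hsecond : ∑ j ∈ Ico 1 n, (j : ℝ) * c (j + 1) = ∑ k ∈ Ico 1 (n + 1), ((k : ℝ) - 1) * c k := by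
    symm
    rw [sum_eq_sum_Ico_succ_bot (show 1 < n + 1 by omega),
      ← sum_Ico_add' (fun k : ℕ => ((k : ℝ) - 1) * c k) 1 n 1]
    simp
  rw [sum_add_distrib, hfirst, hsecond, ← sum_add_distrib, mul_sum]
  exact sum_congr rfl fun k _ => by ring

theorem natCast_mul_cscSum_le {n : ℕ} (hn : 1 ≤ n) : n * cscSum n ≤ (n - 1) * cscSum (n + 1) := by
  rw [cscSum, cscSum, ← sum_Ico_sub_mul_add_mul_succ (fun k => 1 / sin (k * π / (n + 1 : ℕ))) hn,
    mul_sum]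
  exact sum_le_sum fun j hj => natCast_mul_one_div_sin_le hj

theorem cscMean_le_succ (n : ℕ) : cscMean n ≤ cscMean (n + 1) := by
  rcases Nat.eq_zero_or_pos n with rfl | hn
  · simpa [cscMean] using cscSum_nonneg 1
  have hS := cscSum_nonneg (n + 1)
  calc cscMean n = n * cscSum n / n ^ 2 := by unfold cscMean; field_simp
    _ ≤ (n - 1) * cscSum (n + 1) / n ^ 2 :=
        div_le_div_of_nonneg_right (natCast_mul_cscSum_le hn) (by positivity)
    _ ≤ cscSum (n + 1) / (n + 1) := by
        rw [div_le_div_iff₀ (by positivity) (by positivity)]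
        nlinarith
    _ = cscMean (n + 1) := by unfold cscMean; push_cast; ring

theorem monotone_cscMean : Monotone cscMean := monotone_nat_of_le_succ cscMean_le_succ

theorem sin_natSub_mul_pi_div {j n : ℕ} (hj : j ≤ n) :
    sin (((n - j : ℕ) : ℝ) * π / n) = sin (j * π / n) := by
  rcases Nat.eq_zero_or_pos n with rfl | hn
  · simp
  have hn' : (n : ℝ) ≠ 0 := by positivity
  rw [Nat.cast_sub hj, show ((n : ℝ) - j) * π / n = π - j * π / n by field_simp, sin_pi_sub]

theorem sum_Ico_one_div_sin_reflect (n a b : ℕ) (hb : b ≤ n + 1) :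
    ∑ j ∈ Ico (n + 1 - b) (n + 1 - a), 1 / sin (j * π / n) =
      ∑ j ∈ Ico a b, 1 / sin (j * π / n) := by
  rw [← sum_Ico_reflect _ a hb]
  refine sum_congr rfl fun j hj => ?_
  rw [sin_natSub_mul_pi_div (by have := (mem_Ico.1 hj).2; omega)]

theorem cscSum_two_mul_add_one (m : ℕ) :
    cscSum (2 * m + 1) = 2 * ∑ j ∈ Ico 1 (m + 1), 1 / sin (j * π / (2 * m + 1 : ℕ)) := by
  have hreflect := sum_Ico_one_div_sin_reflect (2 * m + 1) 1 (m + 1) (by omega)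
  rw [show 2 * m + 1 + 1 - (m + 1) = m + 1 by omega, show 2 * m + 1 + 1 - 1 = 2 * m + 1 by omega]
    at hreflect
  rw [cscSum, ← sum_Ico_consecutive _ (show 1 ≤ m + 1 by omega) (show m + 1 ≤ 2 * m + 1 by omega),
    hreflect]
  ring

theorem cscSum_two_mul {m : ℕ} (hm : 1 ≤ m) :
    cscSum (2 * m) = 2 * ∑ j ∈ Ico 1 m, 1 / sin (j * π / (2 * m : ℕ)) + 1 := by
  have hreflect := sum_Ico_one_div_sin_reflect (2 * m) 1 m (by omega)
  rw [show 2 * m + 1 - m = m + 1 by omega, show 2 * m + 1 - 1 = 2 * m by omega] at hreflect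
  have hmid : 1 / sin ((m : ℝ) * π / (2 * m : ℕ)) = 1 := by
    have hm' : (m : ℝ) ≠ 0 := by positivity
    rw [show (m : ℝ) * π / (2 * m : ℕ) = π / 2 by push_cast; field_simp, sin_pi_div_two, div_one]
  rw [cscSum, ← sum_Ico_consecutive _ (show 1 ≤ m by omega) (show m ≤ 2 * m by omega),
    sum_eq_sum_Ico_succ_bot (show m < 2 * m by omega), hreflect, hmid]
  ring

theorem sum_cscLaurent_mul (m : ℕ) (x : ℝ) :
    ∑ j ∈ Ico 1 m, cscLaurent (j * x) =
      x⁻¹ * ∑ j ∈ Ico 1 m, (j : ℝ)⁻¹ + x / 6 * ∑ j ∈ Ico 1 m, (j : ℝ)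
        + 7 * x ^ 3 / 360 * ∑ j ∈ Ico 1 m, (j : ℝ) ^ 3
        + 31 * x ^ 5 / 15120 * ∑ j ∈ Ico 1 m, (j : ℝ) ^ 5
        + 127 * x ^ 7 / 604800 * ∑ j ∈ Ico 1 m, (j : ℝ) ^ 7 := by
  simp only [mul_sum, ← sum_add_distrib]
  exact sum_congr rfl fun j _ => by unfold cscLaurent; ring

theorem mul_pi_div_le_pi_div_two {j n : ℕ} (h : 2 * j ≤ n) : (j : ℝ) * π / n ≤ π / 2 := by
  rcases Nat.eq_zero_or_pos n with rfl | hn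
  · simpa using pi_div_two_pos.le
  have h' : (2 * j : ℝ) ≤ n := by exact_mod_cast h
  rw [div_le_div_iff₀ (by positivity) two_pos]
  nlinarith [pi_pos]

theorem sum_cscLaurent_le_sum_one_div_sin {m n : ℕ} (h : 2 * m ≤ n) :
    ∑ j ∈ Ico 1 (m + 1), cscLaurent (j * (π / n)) ≤ ∑ j ∈ Ico 1 (m + 1), 1 / sin (j * π / n) := by
  refine sum_le_sum fun j hj => ?_
  have hj' := mem_Ico.1 hj
  rw [← mul_div_assoc]
  exact cscLaurent_le_one_div_sin (mul_pi_div_mem_Ioo (mem_Ico.2 ⟨hj'.1, by omega⟩)).1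
    (mul_pi_div_le_pi_div_two (by omega))

theorem sum_one_div_sin_le_sum_cscLaurent_add {m n : ℕ} (h : 2 * m ≤ n) :
    ∑ j ∈ Ico 1 (m + 1), 1 / sin (j * π / n) ≤
      ∑ j ∈ Ico 1 (m + 1), (cscLaurent (j * (π / n)) + (j * (π / n)) ^ 9 / 20000) := by
  refine sum_le_sum fun j hj => ?_
  have hj' := mem_Ico.1 hj
  rw [← mul_div_assoc]
  exact one_div_sin_le_cscLaurent_add (mul_pi_div_mem_Ioo (mem_Ico.2 ⟨hj'.1, by omega⟩)).1
    (mul_pi_div_le_pi_div_two (by omega))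

theorem le_sum_one_div_sin_473 :
    (946 : ℝ) ≤ ∑ j ∈ Ico (1 : ℕ) 237, 1 / sin (j * π / (473 : ℕ)) := by
  have := pi_gt_d6
  have := pi_lt_d6
  calc (946 : ℝ)
      ≤ (3.141593 / 473)⁻¹ * ∑ j ∈ Ico (1 : ℕ) 237, (j : ℝ)⁻¹
        + 3.141592 / 473 / 6 * ∑ j ∈ Ico (1 : ℕ) 237, (j : ℝ)
        + 7 * (3.141592 / 473) ^ 3 / 360 * ∑ j ∈ Ico (1 : ℕ) 237, (j : ℝ) ^ 3
        + 31 * (3.141592 / 473) ^ 5 / 15120 * ∑ j ∈ Ico (1 : ℕ) 237, (j : ℝ) ^ 5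
        + 127 * (3.141592 / 473) ^ 7 / 604800 * ∑ j ∈ Ico (1 : ℕ) 237, (j : ℝ) ^ 7 := by
        norm_num [sum_Ico_eq_sum_range, sum_range_succ]
    _ ≤ ∑ j ∈ Ico (1 : ℕ) 237, cscLaurent (j * (π / 473)) := by rw [sum_cscLaurent_mul]; gcongr
    _ ≤ _ := by exact_mod_cast sum_cscLaurent_le_sum_one_div_sin (m := 236) (n := 473) (by norm_num)

theorem four_le_cscMean_473 : 4 ≤ cscMean 473 := by
  rw [cscMean, show cscSum 473 = _ from cscSum_two_mul_add_one 236]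
  calc (4 : ℝ) = 1 / (473 : ℕ) * (2 * 946) := by norm_num
    _ ≤ _ := by gcongr; exact le_sum_one_div_sin_473

theorem sum_one_div_sin_472_le : ∑ j ∈ Ico (1 : ℕ) 236, 1 / sin (j * π / (472 : ℕ)) ≤ 943.45 := by
  have := pi_gt_d6
  have := pi_lt_d6
  calc ∑ j ∈ Ico (1 : ℕ) 236, 1 / sin (j * π / (472 : ℕ))
      ≤ ∑ j ∈ Ico (1 : ℕ) 236, (cscLaurent (j * (π / 472)) + (j * (π / 472)) ^ 9 / 20000) := by
        exact_mod_cast sum_one_div_sin_le_sum_cscLaurent_add (m := 235) (n := 472) (by norm_num)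
    _ = (π / 472)⁻¹ * ∑ j ∈ Ico (1 : ℕ) 236, (j : ℝ)⁻¹
        + π / 472 / 6 * ∑ j ∈ Ico (1 : ℕ) 236, (j : ℝ)
        + 7 * (π / 472) ^ 3 / 360 * ∑ j ∈ Ico (1 : ℕ) 236, (j : ℝ) ^ 3
        + 31 * (π / 472) ^ 5 / 15120 * ∑ j ∈ Ico (1 : ℕ) 236, (j : ℝ) ^ 5
        + 127 * (π / 472) ^ 7 / 604800 * ∑ j ∈ Ico (1 : ℕ) 236, (j : ℝ) ^ 7
        + (π / 472) ^ 9 / 20000 * ∑ j ∈ Ico (1 : ℕ) 236, (j : ℝ) ^ 9 := by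
        rw [sum_add_distrib, sum_cscLaurent_mul]
        congr 1
        rw [mul_sum]
        exact sum_congr rfl fun j _ => by ring
    _ ≤ (3.141592 / 472)⁻¹ * ∑ j ∈ Ico (1 : ℕ) 236, (j : ℝ)⁻¹
        + 3.141593 / 472 / 6 * ∑ j ∈ Ico (1 : ℕ) 236, (j : ℝ)
        + 7 * (3.141593 / 472) ^ 3 / 360 * ∑ j ∈ Ico (1 : ℕ) 236, (j : ℝ) ^ 3
        + 31 * (3.141593 / 472) ^ 5 / 15120 * ∑ j ∈ Ico (1 : ℕ) 236, (j : ℝ) ^ 5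
        + 127 * (3.141593 / 472) ^ 7 / 604800 * ∑ j ∈ Ico (1 : ℕ) 236, (j : ℝ) ^ 7
        + (3.141593 / 472) ^ 9 / 20000 * ∑ j ∈ Ico (1 : ℕ) 236, (j : ℝ) ^ 9 := by
        gcongr
    _ ≤ 943.45 := by norm_num [sum_Ico_eq_sum_range, sum_range_succ]

theorem cscMean_472_lt_four : cscMean 472 < 4 := by
  rw [cscMean, show cscSum 472 = _ from cscSum_two_mul (m := 236) (by norm_num)]
  calc _ ≤ 1 / (472 : ℕ) * (2 * 943.45 + 1 : ℝ) := by gcongr; exact sum_one_div_sin_472_le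
    _ < 4 := by norm_num

end

theorem polygon_sync_inequality_iff_le_472_general
    (n : ℕ) :
    ((1 : ℝ) / n) * ∑ j ∈ Finset.Ico 1 n, 1 / Real.sin ((j : ℝ) * Real.pi / n) < 4 ↔
      n ≤ 472 := by
  change cscMean n < 4 ↔ n ≤ 472
  refine ⟨fun h => ?_, fun h => (monotone_cscMean h).trans_lt cscMean_472_lt_four⟩
  by_contra! hn
  exact h.not_ge (four_le_cscMean_473.trans (monotone_cscMean hn))

/-- The inequality `(1/n) ∑_{j=1}^{n−1} 1/sin(jπ/n) < 4` holds if and only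
if `n ≤ 472`. -/
theorem polygon_sync_inequality_iff_le_472
    (n : ℕ) (hn : 2 ≤ n) :
    ((1 : ℝ) / n) * ∑ j ∈ Finset.Ico 1 n, 1 / Real.sin ((j : ℝ) * Real.pi / n) < 4 ↔
      n ≤ 472 :=
  polygon_sync_inequality_iff_le_472_general n
end

section
/- Let n ≥ 2 be an integer. Then (1/n) ∑_{j=1}^{n−1} 1/sin(jπ/n) ≥ (1/π) · log((1 + cos(π/n))/(1 − cos(π/n))) + 1/(n · sin(π/n)). -/
/-!
The reciprocal of a positive concave function is convex, so `x ↦ 1 / sin x` is convex on `(0, π)`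
and the trapezoid rule overestimates its integral. On the grid of mesh `π / n` between `π / n` and
`π - π / n`, both endpoint values equal `1 / sin (π / n)`, so the trapezoid sum is
`(π / n) (∑ⱼ 1 / sin (j π / n) - 1 / sin (π / n))`, while the antiderivative
`(1 / 2) log ((1 - cos x) / (1 + cos x))` evaluates the integral to
`log ((1 + cos (π / n)) / (1 - cos (π / n)))`.
-/

open Real Set MeasureTheory intervalIntegral

theorem ConcaveOn.convexOn_inv {E : Type*} [AddCommGroup E] [Module ℝ E] {s : Set E} {f : E → ℝ}
    (hf : ConcaveOn ℝ s f) (hpos : ∀ x ∈ s, 0 < f x) : ConvexOn ℝ s fun x ↦ (f x)⁻¹ := by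
  have hinv : ConvexOn ℝ (Ioi 0) fun y : ℝ ↦ y⁻¹ := by
    simpa only [zpow_neg_one] using convexOn_zpow (𝕜 := ℝ) (-1)
  refine ⟨hf.1, fun x hx y hy a b ha hb hab ↦ ?_⟩
  have hmix : 0 < a • f x + b • f y := (convex_Ioi (0 : ℝ)) (hpos x hx) (hpos y hy) ha hb hab
  calc (f (a • x + b • y))⁻¹ ≤ (a • f x + b • f y)⁻¹ := inv_anti₀ hmix (hf.2 hx hy ha hb hab)
    _ ≤ a • (f x)⁻¹ + b • (f y)⁻¹ := hinv.2 (hpos x hx) (hpos y hy) ha hb hab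

theorem ConvexOn.integral_le_trapezoid {f : ℝ → ℝ} {a b : ℝ} (hab : a ≤ b)
    (hf : ConvexOn ℝ (Icc a b) f) (hfi : IntervalIntegrable f volume a b) :
    ∫ x in a..b, f x ≤ (b - a) / 2 * (f a + f b) := by
  rcases hab.eq_or_lt with rfl | hab
  · simp
  set s := (f b - f a) / (b - a)
  have hchord : ∀ y ∈ Ioo a b, f y ≤ f a + s * (y - a) := fun y hy ↦ by
    have := hf.secant_mono_aux1 (left_mem_Icc.2 hab.le) (right_mem_Icc.2 hab.le) hy.1 hy.2
    rw [← mul_le_mul_iff_of_pos_left (sub_pos.2 hab)]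
    unfold s
    field_simp
    linarith
  calc ∫ x in a..b, f x ≤ ∫ y in a..b, (f a + s * (y - a)) :=
        integral_mono_on_of_le_Ioo hab.le hfi (Continuous.intervalIntegrable (by fun_prop) _ _)
          hchord
    _ = (b - a) / 2 * (f a + f b) := by
        rw [integral_add intervalIntegrable_const (Continuous.intervalIntegrable (by fun_prop) _ _),
          intervalIntegral.integral_const, intervalIntegral.integral_const_mul,
          integral_comp_sub_right (fun x ↦ x), integral_id]
        unfold s
        field_simp
        ring

theorem ConvexOn.integral_le_composite_trapezoid {f : ℝ → ℝ} {a h : ℝ} (hh : 0 ≤ h) (m : ℕ)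
    (hf : ConvexOn ℝ (Icc a (a + m * h)) f) (hfi : IntervalIntegrable f volume a (a + m * h)) :
    ∫ x in a..a + m * h, f x ≤
      h * (∑ k ∈ Finset.range (m + 1), f (a + k * h) - (f a + f (a + m * h)) / 2) := by
  induction m with
  | zero => simp
  | succ m ih =>
    have hmid : a + m * h ∈ Icc a (a + (m + 1 : ℕ) * h) := by
      push_cast; constructor <;> nlinarith [(m.cast_nonneg : (0 : ℝ) ≤ m)]
    have hleft : Icc a (a + m * h) ⊆ Icc a (a + (m + 1 : ℕ) * h) := Icc_subset_Icc_right hmid.2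
    have hright : Icc (a + m * h) (a + (m + 1 : ℕ) * h) ⊆ Icc a (a + (m + 1 : ℕ) * h) :=
      Icc_subset_Icc_left hmid.1
    have hsub : ∀ {c d}, c ≤ d → Icc c d ⊆ Icc a (a + (m + 1 : ℕ) * h) →
        IntervalIntegrable f volume c d := fun hcd hcd' ↦
      hfi.mono_set (by rwa [uIcc_of_le hcd, uIcc_of_le (hmid.1.trans hmid.2)])
    have hfi₁ := hsub hmid.1 hleft
    have hfi₂ := hsub hmid.2 hright
    have h₁ := ih (hf.subset hleft (convex_Icc _ _)) hfi₁
    have h₂ := (hf.subset hright (convex_Icc _ _)).integral_le_trapezoid hmid.2 hfi₂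
    have hstep : a + (m + 1 : ℕ) * h - (a + m * h) = h := by push_cast; ring
    rw [hstep] at h₂
    rw [← integral_add_adjacent_intervals hfi₁ hfi₂, Finset.sum_range_succ]
    linarith

theorem convexOn_inv_sin : ConvexOn ℝ (Ioo 0 π) fun x ↦ (sin x)⁻¹ :=
  (strictConcaveOn_sin_Icc.concaveOn.subset Ioo_subset_Icc_self (convex_Ioo 0 π)).convexOn_inv
    fun _ hx ↦ sin_pos_of_pos_of_lt_pi hx.1 hx.2

theorem intervalIntegrable_inv_sin {a b : ℝ} (ha : a ∈ Ioo 0 π) (hb : b ∈ Ioo 0 π) :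
    IntervalIntegrable (fun x ↦ (sin x)⁻¹) volume a b := by
  have hsub : uIcc a b ⊆ Ioo 0 π := ordConnected_Ioo.uIcc_subset ha hb
  exact (continuousOn_sin.inv₀ fun x hx ↦
    (sin_pos_of_pos_of_lt_pi (hsub hx).1 (hsub hx).2).ne').intervalIntegrable

theorem one_sub_cos_pos_of_mem_Ioo {x : ℝ} (hx : x ∈ Ioo 0 π) : 0 < 1 - cos x := by
  have := cos_lt_cos_of_nonneg_of_le_pi le_rfl hx.2.le hx.1
  rw [cos_zero] at this
  linarith

theorem one_add_cos_pos_of_mem_Ioo {x : ℝ} (hx : x ∈ Ioo 0 π) : 0 < 1 + cos x := by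
  have := cos_lt_cos_of_nonneg_of_le_pi hx.1.le le_rfl hx.2
  rw [cos_pi] at this
  linarith

theorem hasDerivAt_log_one_sub_cos_div_one_add_cos {x : ℝ} (hx : x ∈ Ioo 0 π) :
    HasDerivAt (fun y ↦ log ((1 - cos y) / (1 + cos y)) / 2) (sin x)⁻¹ x := by
  have hminus := one_sub_cos_pos_of_mem_Ioo hx
  have hplus := one_add_cos_pos_of_mem_Ioo hx
  have hsin := (sin_pos_of_pos_of_lt_pi hx.1 hx.2).ne'
  have hquot :=
    ((hasDerivAt_cos x).const_sub 1).fun_div ((hasDerivAt_cos x).const_add 1) hplus.ne'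
  refine ((hquot.log (div_pos hminus hplus).ne').div_const 2).congr_deriv ?_
  have := sin_sq_add_cos_sq x
  field_simp
  nlinarith

theorem integral_inv_sin {a b : ℝ} (ha : a ∈ Ioo 0 π) (hb : b ∈ Ioo 0 π) :
    ∫ x in a..b, (sin x)⁻¹ =
      log ((1 - cos b) / (1 + cos b)) / 2 - log ((1 - cos a) / (1 + cos a)) / 2 := by
  have hsub : uIcc a b ⊆ Ioo 0 π := ordConnected_Ioo.uIcc_subset ha hb
  exact integral_eq_sub_of_hasDerivAt
    (fun x hx ↦ hasDerivAt_log_one_sub_cos_div_one_add_cos (hsub hx))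
    (intervalIntegrable_inv_sin ha hb)

theorem integral_inv_sin_pi_sub {c : ℝ} (hc : c ∈ Ioo 0 π) :
    ∫ x in c..π - c, (sin x)⁻¹ = log ((1 + cos c) / (1 - cos c)) := by
  have hc' : π - c ∈ Ioo 0 π := ⟨by linarith [hc.2], by linarith [hc.1]⟩
  rw [integral_inv_sin hc hc', cos_pi_sub, sub_neg_eq_add, ← sub_eq_add_neg,
    ← inv_div (1 - cos c), log_inv]
  ring

/-- Lower bound for the polygonal sum:
`(1/n) ∑_{j=1}^{n−1} 1/sin(jπ/n)
  ≥ (1/π) log((1 + cos(π/n))/(1 − cos(π/n))) + 1/(n sin(π/n))`. -/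
theorem polygon_sum_lower_bound
    (n : ℕ) (hn : 2 ≤ n) :
    ((1 : ℝ) / n) * ∑ j ∈ Finset.Ico 1 n, 1 / Real.sin ((j : ℝ) * Real.pi / n) ≥
      (1 / Real.pi) *
        Real.log ((1 + Real.cos (Real.pi / n)) / (1 - Real.cos (Real.pi / n))) +
      1 / (n * Real.sin (Real.pi / n)) := by
  obtain ⟨m, rfl⟩ : ∃ m, n = m + 2 := ⟨n - 2, by omega⟩
  set h : ℝ := π / (m + 2 : ℕ) with h_def
  have hh : 0 < h := by positivity
  have hend : h + m * h = π - h := by rw [h_def]; push_cast; field_simp; ring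
  have hh_mem : h ∈ Ioo 0 π := ⟨hh, by rw [h_def]; exact div_lt_self pi_pos (by norm_cast)⟩
  have hend_mem : π - h ∈ Ioo 0 π := ⟨by linarith [hh_mem.2], by linarith⟩
  have hsum : ∑ j ∈ Finset.Ico 1 (m + 2), 1 / sin (j * π / (m + 2 : ℕ)) =
      ∑ k ∈ Finset.range (m + 1), (sin (h + k * h))⁻¹ := by
    rw [Finset.sum_Ico_eq_sum_range]
    refine Finset.sum_congr rfl fun k _ ↦ ?_
    rw [one_div, h_def]
    push_cast
    ring_nf
  have htrap := (convexOn_inv_sin.subset (hend ▸ Icc_subset_Ioo hh_mem.1 hend_mem.2)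
    (convex_Icc _ _)).integral_le_composite_trapezoid hh.le m
    (hend ▸ intervalIntegrable_inv_sin hh_mem hend_mem)
  rw [hend, integral_inv_sin_pi_sub hh_mem, sin_pi_sub] at htrap
  rw [hsum, ge_iff_le]
  calc 1 / π * log ((1 + cos h) / (1 - cos h)) + 1 / ((m + 2 : ℕ) * sin h)
      ≤ 1 / π * (h * (∑ k ∈ Finset.range (m + 1), (sin (h + k * h))⁻¹ -
          ((sin h)⁻¹ + (sin h)⁻¹) / 2)) + 1 / ((m + 2 : ℕ) * sin h) := by gcongr
    _ = 1 / (m + 2 : ℕ) * ∑ k ∈ Finset.range (m + 1), (sin (h + k * h))⁻¹ := by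
      rw [h_def]; field_simp; ring
end

section
/- The function f(x) = (1/π) · (log((1 + cos x)/(1 − cos x)) + x/sin(x)) is strictly decreasing on the open interval (0, π/2): if 0 < x_1 < x_2 < π/2 then f(x_1) > f(x_2). -/
open Real Set

private lemma g_strictAntiOn :
    StrictAntiOn
      (fun x : ℝ => Real.log (1 + Real.cos x) - Real.log (1 - Real.cos x) + x / Real.sin x)
      (Set.Ioo 0 (Real.pi / 2)) := by
  have hconv : Convex ℝ (Set.Ioo (0:ℝ) (Real.pi / 2)) := convex_Ioo _ _
  set g : ℝ → ℝ :=
    fun x => Real.log (1 + Real.cos x) - Real.log (1 - Real.cos x) + x / Real.sin x with hg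
  have key : ∀ x ∈ Set.Ioo (0:ℝ) (Real.pi / 2),
      HasDerivAt g
        ((-Real.sin x) / (1 + Real.cos x) - Real.sin x / (1 - Real.cos x)
          + (1 * Real.sin x - x * Real.cos x) / (Real.sin x ^ 2)) x := by
    intro x hx
    have hs : 0 < Real.sin x :=
      Real.sin_pos_of_pos_of_lt_pi hx.1 (lt_trans hx.2 (by linarith [Real.pi_pos]))
    have hc : 0 < Real.cos x := Real.cos_pos_of_mem_Ioo ⟨by linarith [hx.1, Real.pi_pos], hx.2⟩
    have hc1 : Real.cos x < 1 := by
      have := Real.cos_lt_cos_of_nonneg_of_le_pi (le_refl 0)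
        (le_trans hx.2.le (by linarith [Real.pi_pos])) hx.1
      simpa using this
    have h1 : HasDerivAt (fun x : ℝ => 1 + Real.cos x) (-Real.sin x) x :=
      (Real.hasDerivAt_cos x).const_add 1
    have h2 : HasDerivAt (fun x : ℝ => 1 - Real.cos x) (-(-Real.sin x)) x :=
      (Real.hasDerivAt_cos x).const_sub 1
    have hl1 : HasDerivAt (fun x : ℝ => Real.log (1 + Real.cos x))
        ((-Real.sin x) / (1 + Real.cos x)) x := h1.log (by positivity)
    have hl2 : HasDerivAt (fun x : ℝ => Real.log (1 - Real.cos x))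
        (Real.sin x / (1 - Real.cos x)) x := by
      have := h2.log (by nlinarith : (1 - Real.cos x) ≠ 0)
      simpa using this
    have hd : HasDerivAt (fun x : ℝ => x / Real.sin x)
        ((1 * Real.sin x - x * Real.cos x) / (Real.sin x ^ 2)) x :=
      (hasDerivAt_id x).div (Real.hasDerivAt_sin x) (ne_of_gt hs)
    exact ((hl1.sub hl2).add hd)
  refine StrictAntiOn.mono ?_ (le_refl _) |>.mono (le_refl _)
  apply strictAntiOn_of_hasDerivWithinAt_neg hconv
  · intro x hx
    exact ((key x hx).continuousAt).continuousWithinAt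
  · intro x hx
    rw [interior_Ioo] at hx
    exact ((key x hx).hasDerivWithinAt)
  · intro x hx
    rw [interior_Ioo] at hx
    have hs : 0 < Real.sin x :=
      Real.sin_pos_of_pos_of_lt_pi hx.1 (lt_trans hx.2 (by linarith [Real.pi_pos]))
    have hc : 0 < Real.cos x := Real.cos_pos_of_mem_Ioo ⟨by linarith [hx.1, Real.pi_pos], hx.2⟩
    have hc1 : Real.cos x < 1 := by
      have := Real.cos_lt_cos_of_nonneg_of_le_pi (le_refl 0)
        (le_trans hx.2.le (by linarith [Real.pi_pos])) hx.1
      simpa using this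
    have hsq : Real.sin x ^ 2 = (1 + Real.cos x) * (1 - Real.cos x) := by
      have := Real.sin_sq_add_cos_sq x; ring_nf; nlinarith
    have heq : (-Real.sin x) / (1 + Real.cos x) - Real.sin x / (1 - Real.cos x)
          + (1 * Real.sin x - x * Real.cos x) / (Real.sin x ^ 2)
        = -((Real.sin x + x * Real.cos x) / Real.sin x ^ 2) := by
      have h1 : (1 + Real.cos x) ≠ 0 := by positivity
      have h2 : (1 - Real.cos x) ≠ 0 := by nlinarith
      have h3 : Real.sin x ≠ 0 := ne_of_gt hs
      rw [hsq]
      field_simp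
      nlinarith [Real.sin_sq_add_cos_sq x]
    rw [heq]
    have : 0 < (Real.sin x + x * Real.cos x) / Real.sin x ^ 2 :=
      div_pos (by nlinarith [hx.1]) (by positivity)
    linarith

/-- The function `f(x) = (1/π)(log((1 + cos x)/(1 − cos x)) + x/sin x)` is
strictly decreasing on `(0, π/2)`. -/
theorem f_strict_anti_on
    (x₁ x₂ : ℝ) (h₁ : 0 < x₁) (h₁₂ : x₁ < x₂) (h₂ : x₂ < Real.pi / 2) :
    (1 / Real.pi) *
        (Real.log ((1 + Real.cos x₁) / (1 - Real.cos x₁)) + x₁ / Real.sin x₁) >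
      (1 / Real.pi) *
        (Real.log ((1 + Real.cos x₂) / (1 - Real.cos x₂)) + x₂ / Real.sin x₂) := by
  have hmem₁ : x₁ ∈ Set.Ioo (0:ℝ) (Real.pi / 2) := ⟨h₁, lt_trans h₁₂ h₂⟩
  have hmem₂ : x₂ ∈ Set.Ioo (0:ℝ) (Real.pi / 2) := ⟨lt_trans h₁ h₁₂, h₂⟩
  have hg := g_strictAntiOn hmem₁ hmem₂ h₁₂
  have hlog : ∀ x ∈ Set.Ioo (0:ℝ) (Real.pi / 2),
      Real.log ((1 + Real.cos x) / (1 - Real.cos x))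
        = Real.log (1 + Real.cos x) - Real.log (1 - Real.cos x) := by
    intro x hx
    have hc : 0 < Real.cos x := Real.cos_pos_of_mem_Ioo ⟨by linarith [hx.1, Real.pi_pos], hx.2⟩
    have hc1 : Real.cos x < 1 := by
      have := Real.cos_lt_cos_of_nonneg_of_le_pi (le_refl 0)
        (le_trans hx.2.le (by linarith [Real.pi_pos])) hx.1
      simpa using this
    exact Real.log_div (by positivity) (by nlinarith)
  rw [hlog x₁ hmem₁, hlog x₂ hmem₂]
  have hπ : (0:ℝ) < 1 / Real.pi := by positivity
  exact mul_lt_mul_of_pos_left hg hπ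
end

section
/- For all real numbers y with 0 < y < 1 and all m_1, m_2 > 0, the inequality m_1²/(2y) + 4 m_1 m_2/√(1 + y²) + m_2²/2 < (2 m_1/y³ + 2 m_2) · (2 m_1 y² + 2 m_2) holds. (This is the condition ∑_{i<j} m_i m_j/r_{ij} < (∑ m_i/s_i³)(∑ m_i s_i²) guaranteeing a synchronous solution, specialized to the rhomboidal configuration q_1 = −q_3 = (0, y), q_2 = −q_4 = (1, 0) with masses m_1 = m_3, m_2 = m_4.) -/
/-- The synchronous-solution inequality for the rhomboidal configuration:
for `0 < y < 1` and `m₁, m₂ > 0`,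
`m₁²/(2y) + 4m₁m₂/√(1 + y²) + m₂²/2 < (2m₁/y³ + 2m₂)(2m₁y² + 2m₂)`. -/
theorem rhomboidal_sync_inequality
    (y : ℝ) (hy0 : 0 < y) (hy1 : y < 1) (m₁ m₂ : ℝ) (hm₁ : 0 < m₁) (hm₂ : 0 < m₂) :
    m₁ ^ 2 / (2 * y) + 4 * m₁ * m₂ / Real.sqrt (1 + y ^ 2) + m₂ ^ 2 / 2 <
      (2 * m₁ / y ^ 3 + 2 * m₂) * (2 * m₁ * y ^ 2 + 2 * m₂) := by
  have hs : 1 ≤ Real.sqrt (1 + y ^ 2) := by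
    nlinarith [Real.sq_sqrt (show (0:ℝ) ≤ 1 + y ^ 2 by positivity),
      Real.sqrt_nonneg (1 + y ^ 2), sq_nonneg (Real.sqrt (1 + y ^ 2) - 1), sq_nonneg y]
  have h1 : 4 * m₁ * m₂ / Real.sqrt (1 + y ^ 2) ≤ 4 * m₁ * m₂ := by
    rw [div_le_iff₀ (by linarith)]
    nlinarith [mul_pos hm₁ hm₂]
  have hrhs : (2 * m₁ / y ^ 3 + 2 * m₂) * (2 * m₁ * y ^ 2 + 2 * m₂) =
      4 * m₁ ^ 2 / y + 4 * m₁ * m₂ / y ^ 3 + 4 * m₁ * m₂ * y ^ 2 + 4 * m₂ ^ 2 := by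
    field_simp
    ring
  have ha : m₁ ^ 2 / (2 * y) < 4 * m₁ ^ 2 / y := by
    rw [div_lt_div_iff₀ (by positivity) hy0]
    nlinarith [mul_pos (pow_pos hm₁ 2) hy0]
  have hb : 4 * m₁ * m₂ < 4 * m₁ * m₂ / y ^ 3 := by
    rw [lt_div_iff₀ (pow_pos hy0 3)]
    have hy3 : y ^ 3 < 1 := pow_lt_one₀ hy0.le hy1 three_ne_zero
    nlinarith [mul_pos hm₁ hm₂]
  have hc : m₂ ^ 2 / 2 < 4 * m₂ ^ 2 := by nlinarith
  have hd : 0 ≤ 4 * m₁ * m₂ * y ^ 2 := by positivity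
  rw [hrhs]
  linarith
end
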